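/- arXiv:2309.01119 — 5 statements merged into one kernel-verified Lean document; each statement's English description precedes it below -/
import Mathlib

section
/- Let T = {0, u₁, u₂} ⊆ V be three distinct points with u₁, u₂ nonzero and linearly dependent (so u₂ = t·u₁ for some t ∈ F_q, t ≠ 0, 1). Then the number of non-constant codewords of RM_q(1,m) vanishing on all of T is q^{m-1} − 1; vanishing on exactly two points of T is 0; vanishing on exactly one point is 3(q-1)q^{m-1}; and vanishing on no point of T is (q-1)(q^m − 2q^{m-1} − 1). -/
open Finset in
lemma card_filter_prod {α β : Type*} [Fintype α] [Fintype β]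
    (Q : α → Prop) (R : α → β → Prop) [DecidablePred Q] [∀ a, DecidablePred (R a)] :
    (Finset.univ.filter (fun p : α × β => Q p.1 ∧ R p.1 p.2)).card
      = ∑ a ∈ Finset.univ.filter Q, (Finset.univ.filter (R a)).card := by
  rw [Finset.card_filter, ← Finset.univ_product_univ, Finset.sum_product, Finset.sum_filter]
  refine Finset.sum_congr rfl fun a _ => ?_
  by_cases h : Q a
  · simp only [h, if_true, true_and, Finset.card_filter]
  · simp [h]

lemma ncard_filter_triple {α : Type*} (x y z : α) (hxy : x ≠ y) (hxz : x ≠ z) (hyz : y ≠ z)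
    (P : α → Prop) [DecidablePred P] :
    {w ∈ ({x, y, z} : Set α) | P w}.ncard
      = (if P x then 1 else 0) + (if P y then 1 else 0) + (if P z then 1 else 0) := by
  classical
  have h : {w ∈ ({x, y, z} : Set α) | P w} = ↑(({x, y, z} : Finset α).filter P) := by
    ext w; simp
  rw [h, Set.ncard_coe_finset]
  rw [Finset.filter_insert, Finset.filter_insert, Finset.filter_singleton]
  split_ifs <;> simp_all [Finset.card_insert_of_notMem, hxy, hxz, hyz]

lemma card_hyperplane {F : Type} [Field F] [Fintype F] [DecidableEq F] {m : ℕ} (u : Fin m → F)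
    (hu : u ≠ 0) (a : F) :
    (Finset.univ.filter (fun v : Fin m → F => ∑ i, v i * u i = a)).card
      = Fintype.card F ^ (m - 1) := by
  classical
  obtain ⟨i₀, hi₀⟩ : ∃ i, u i ≠ 0 := by
    by_contra h; push_neg at h; exact hu (funext h)
  have hsum : ∀ c : F, ∑ i, (Pi.single i₀ c : Fin m → F) i * u i = c * u i₀ := by
    intro c
    rw [Finset.sum_eq_single i₀]
    · simp
    · intro j _ hj; simp [Pi.single_eq_of_ne hj]
    · simp
  have hfib : ∀ b : F, (Finset.univ.filter (fun v : Fin m → F => ∑ i, v i * u i = b)).card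
      = (Finset.univ.filter (fun v : Fin m → F => ∑ i, v i * u i = a)).card := by
    intro b
    apply Finset.card_bij (fun v _ => v + Pi.single i₀ ((a - b) * (u i₀)⁻¹))
    · intro v hv
      simp only [Finset.mem_filter, Finset.mem_univ, true_and] at hv ⊢
      simp only [Pi.add_apply, add_mul, Finset.sum_add_distrib, hv, hsum]
      field_simp
      ring
    · intro v1 h1 v2 h2 he
      exact add_right_cancel he
    · intro w hw
      refine ⟨w - Pi.single i₀ ((a - b) * (u i₀)⁻¹), ?_, by abel⟩
      simp only [Finset.mem_filter, Finset.mem_univ, true_and] at hw ⊢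
      simp only [Pi.sub_apply, sub_mul, Finset.sum_sub_distrib, hw, hsum]
      field_simp
      ring
  have htot : Fintype.card F ^ m = ∑ b : F,
      (Finset.univ.filter (fun v : Fin m → F => ∑ i, v i * u i = b)).card := by
    rw [show Fintype.card F ^ m = Fintype.card (Fin m → F) by simp [Fintype.card_fun],
      ← Finset.card_univ]
    exact Finset.card_eq_sum_card_fiberwise (fun x _ => Finset.mem_univ _)
  have hm : 1 ≤ m := by
    rcases Nat.eq_zero_or_pos m with h | h
    · subst h; exact absurd (funext fun i => i.elim0) hu
    · exact h
  have key : Fintype.card F * (Finset.univ.filter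
      (fun v : Fin m → F => ∑ i, v i * u i = a)).card = Fintype.card F ^ m := by
    have hc : ∑ b : F, (Finset.univ.filter (fun v : Fin m → F => ∑ i, v i * u i = b)).card
        = ∑ _b : F, (Finset.univ.filter (fun v : Fin m → F => ∑ i, v i * u i = a)).card :=
      Finset.sum_congr rfl fun b _ => hfib b
    rw [htot, hc, Finset.sum_const, Finset.card_univ, smul_eq_mul]
  have hpow : Fintype.card F ^ m = Fintype.card F * Fintype.card F ^ (m - 1) := by
    obtain ⟨k, hk⟩ := Nat.exists_eq_succ_of_ne_zero (Nat.one_le_iff_ne_zero.mp hm)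
    subst hk
    simp [pow_succ, mul_comm]
  exact Nat.eq_of_mul_eq_mul_left Fintype.card_pos (by rw [key, hpow])

lemma indicator_cases {F : Type} [Field F] [DecidableEq F] (t a b : F) (ht0 : t ≠ 0) (ht1 : t ≠ 1) :
    ((if b = 0 then 1 else 0) + (if a + b = 0 then 1 else 0)
        + (if t * a + b = 0 then 1 else 0) = 3 ↔ a = 0 ∧ b = 0) ∧
    ¬((if b = 0 then 1 else 0) + (if a + b = 0 then 1 else 0)
        + (if t * a + b = 0 then 1 else 0) = 2) ∧
    ((if b = 0 then 1 else 0) + (if a + b = 0 then 1 else 0)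
        + (if t * a + b = 0 then 1 else 0) = 1
      ↔ a ≠ 0 ∧ (b = 0 ∨ b = -a ∨ b = -(t * a))) ∧
    ((if b = 0 then 1 else 0) + (if a + b = 0 then 1 else 0)
        + (if t * a + b = 0 then 1 else 0) = 0
      ↔ (a = 0 ∧ b ≠ 0) ∨ (a ≠ 0 ∧ b ≠ 0 ∧ b ≠ -a ∧ b ≠ -(t * a))) := by
  rcases eq_or_ne a 0 with ha | ha
  · subst ha
    rcases eq_or_ne b 0 with hb | hb <;> simp [hb]
  · have h1 : a + b = 0 ↔ b = -a := by constructor <;> intro h <;> linear_combination h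
    have h2 : t * a + b = 0 ↔ b = -(t * a) := by constructor <;> intro h <;> linear_combination h
    have d1 : (-a : F) ≠ 0 := neg_ne_zero.mpr ha
    have d2 : (-(t * a) : F) ≠ 0 := neg_ne_zero.mpr (mul_ne_zero ht0 ha)
    have d3 : (-a : F) ≠ -(t * a) := by
      intro h
      apply ht1
      have h' : a = t * a := by linear_combination -h
      field_simp at h'
      exact h'.symm
    simp only [h1, h2]
    rcases eq_or_ne b 0 with hb | hb <;> rcases eq_or_ne b (-a) with hb1 | hb1 <;>
      rcases eq_or_ne b (-(t*a)) with hb2 | hb2 <;>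
      simp_all

/-- Counts of non-constant codewords of `RM_q(1,m)` by number of zeros on
`T = {0, u₁, u₂}` with `u₁, u₂` nonzero, distinct and linearly dependent. -/
theorem stmt_7 (F : Type) [Field F] [Fintype F] (q m : ℕ) (hq : q = Fintype.card F)
    (hq3 : 3 ≤ q) (hm : 1 ≤ m) (u₁ u₂ : Fin m → F) (hu₁ : u₁ ≠ 0) (hu₂ : u₂ ≠ 0)
    (hne : u₁ ≠ u₂) (t : F) (ht : u₂ = t • u₁)
    (T : Set (Fin m → F)) (hT : T = {0, u₁, u₂})
    (NC : Set ((Fin m → F) → F))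
    (hNC : NC = {c | ∃ (l : (Fin m → F) →ₗ[F] F), l ≠ 0 ∧ ∃ b : F, c = fun x => l x + b}) :
    {c ∈ NC | {x ∈ T | c x = 0}.ncard = 3}.ncard = q ^ (m - 1) - 1 ∧
    {c ∈ NC | {x ∈ T | c x = 0}.ncard = 2}.ncard = 0 ∧
    {c ∈ NC | {x ∈ T | c x = 0}.ncard = 1}.ncard = 3 * (q - 1) * q ^ (m - 1) ∧
    {c ∈ NC | {x ∈ T | c x = 0}.ncard = 0}.ncard
      = (q - 1) * (q ^ m - 2 * q ^ (m - 1) - 1) := by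
  classical
  subst hT hNC
  -- basic facts
  have ht0 : t ≠ 0 := by rintro rfl; exact hu₂ (by simp [ht])
  have ht1 : t ≠ 1 := by rintro rfl; exact hne (by simp [ht])
  have h0u₁ : (0 : Fin m → F) ≠ u₁ := fun h => hu₁ h.symm
  have h0u₂ : (0 : Fin m → F) ≠ u₂ := fun h => hu₂ h.symm
  -- the parametrization
  set Φ : (Fin m → F) × F → ((Fin m → F) → F) :=
    fun p => fun x => (∑ i, p.1 i * x i) + p.2 with hΦ
  have hsingle : ∀ (v : Fin m → F) (i : Fin m),
      ∑ j, v j * (Pi.single i 1 : Fin m → F) j = v i := by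
    intro v i
    rw [Finset.sum_eq_single i]
    · simp
    · intro j _ hj; simp [Pi.single_eq_of_ne hj]
    · simp
  have hΦinj : Function.Injective Φ := by
    intro p p' h
    have hb : p.2 = p'.2 := by
      have := congrFun h 0
      simpa [hΦ] using this
    have hv : p.1 = p'.1 := by
      funext i
      have := congrFun h (Pi.single i 1)
      simp only [hΦ, hsingle, hb] at this
      exact add_right_cancel this
    exact Prod.ext hv hb
  -- membership in NC
  have hNCmem : ∀ c : (Fin m → F) → F,
      (∃ (l : (Fin m → F) →ₗ[F] F), l ≠ 0 ∧ ∃ b : F, c = fun x => l x + b)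
        ↔ ∃ p : (Fin m → F) × F, p.1 ≠ 0 ∧ c = Φ p := by
    intro c
    constructor
    · rintro ⟨l, hl, b, rfl⟩
      have hrep : ∀ x, l x = ∑ i, (l (Pi.single i 1)) * x i := by
        intro x
        rw [LinearMap.pi_apply_eq_sum_univ]
        refine Finset.sum_congr rfl fun i _ => ?_
        rw [smul_eq_mul, mul_comm]
        congr 1
        congr 1
        funext j
        simp [Pi.single_apply, eq_comm]
      refine ⟨((fun i => l (Pi.single i 1)), b), ?_, ?_⟩
      · intro hv
        apply hl
        refine LinearMap.ext fun x => ?_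
        rw [hrep x]
        have hvi : ∀ i, l (Pi.single i 1) = 0 := fun i => congrFun hv i
        simp [hvi]
      · funext x
        simp only [hΦ, hrep x]
    · rintro ⟨⟨v, b⟩, hv, rfl⟩
      refine ⟨∑ i, v i • LinearMap.proj i, ?_, b, ?_⟩
      · obtain ⟨i, hi⟩ := Function.ne_iff.mp hv
        intro h0
        have := congrFun (congrArg DFunLike.coe h0) (Pi.single i 1)
        simp only [LinearMap.sum_apply, LinearMap.smul_apply, LinearMap.proj_apply,
          LinearMap.zero_apply, smul_eq_mul, hsingle] at this
        exact hi this
      · funext x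
        simp [hΦ, LinearMap.sum_apply]
  subst hq
  set c := Fintype.card F with hc
  have hc1 : 1 ≤ c := Fintype.card_pos
  have hQ1 : 1 ≤ c ^ (m - 1) := Nat.one_le_pow _ _ hc1
  have hqm : c ^ m = c ^ (m - 1) * c := by
    obtain ⟨k, hk⟩ := Nat.exists_eq_succ_of_ne_zero (Nat.one_le_iff_ne_zero.mp hm)
    subst hk
    simp [pow_succ]
  -- zero counting for a parametrized codeword
  have hzero : ∀ p : (Fin m → F) × F,
      {x ∈ ({0, u₁, u₂} : Set (Fin m → F)) | Φ p x = 0}.ncard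
        = (if p.2 = 0 then 1 else 0)
          + (if (∑ i, p.1 i * u₁ i) + p.2 = 0 then 1 else 0)
          + (if t * (∑ i, p.1 i * u₁ i) + p.2 = 0 then 1 else 0) := by
    rintro ⟨v, b⟩
    have e0 : Φ (v, b) 0 = b := by simp [hΦ]
    have e1 : Φ (v, b) u₁ = (∑ i, v i * u₁ i) + b := rfl
    have e2 : Φ (v, b) u₂ = t * (∑ i, v i * u₁ i) + b := by
      simp only [hΦ, ht, Pi.smul_apply, smul_eq_mul]
      rw [Finset.mul_sum]
      congr 1
      exact Finset.sum_congr rfl fun i _ => by ring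
    rw [ncard_filter_triple 0 u₁ u₂ h0u₁ h0u₂ hne (fun x => Φ (v, b) x = 0)]
    simp only [e0, e1, e2]
  refine ⟨?_, ?_, ?_, ?_⟩
  · -- exactly 3 zeros
    have hset : {c ∈ {c | ∃ (l : (Fin m → F) →ₗ[F] F), l ≠ 0 ∧ ∃ b : F, c = fun x => l x + b} |
        {x ∈ ({0, u₁, u₂} : Set (Fin m → F)) | c x = 0}.ncard = 3}
        = Φ '' {p | (p.1 ≠ 0 ∧ (∑ i, p.1 i * u₁ i) = 0) ∧ p.2 = 0} := by
      ext c0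
      simp only [Set.mem_setOf_eq, Set.mem_image]
      constructor
      · rintro ⟨hc0, h3⟩
        obtain ⟨p, hp, rfl⟩ := (hNCmem _).mp hc0
        rw [hzero p] at h3
        obtain ⟨hA, hb⟩ := (indicator_cases t _ p.2 ht0 ht1).1.mp h3
        exact ⟨p, ⟨⟨hp, hA⟩, hb⟩, rfl⟩
      · rintro ⟨p, ⟨⟨hp, hA⟩, hb⟩, rfl⟩
        refine ⟨(hNCmem _).mpr ⟨p, hp, rfl⟩, ?_⟩
        rw [hzero p]
        exact (indicator_cases t _ p.2 ht0 ht1).1.mpr ⟨hA, hb⟩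
    rw [hset, Set.ncard_image_of_injective _ hΦinj]
    have hco : {p : (Fin m → F) × F | (p.1 ≠ 0 ∧ (∑ i, p.1 i * u₁ i) = 0) ∧ p.2 = 0}
        = ↑(Finset.univ.filter
            (fun p : (Fin m → F) × F => (p.1 ≠ 0 ∧ (∑ i, p.1 i * u₁ i) = 0) ∧ p.2 = 0)) := by
      ext p; simp
    rw [hco, Set.ncard_coe_finset,
      card_filter_prod (fun v : Fin m → F => v ≠ 0 ∧ (∑ i, v i * u₁ i) = 0) (fun _ b => b = 0)]
    have hb0 : (Finset.univ.filter (fun b : F => b = 0)).card = 1 := by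
      rw [Finset.filter_eq' Finset.univ (0 : F)]
      simp
    have hA0 : (Finset.univ.filter
        (fun v : Fin m → F => v ≠ 0 ∧ (∑ i, v i * u₁ i) = 0)).card = c ^ (m - 1) - 1 := by
      have he : Finset.univ.filter (fun v : Fin m → F => v ≠ 0 ∧ (∑ i, v i * u₁ i) = 0)
          = (Finset.univ.filter (fun v : Fin m → F => (∑ i, v i * u₁ i) = 0)).erase 0 := by
        ext v; simp [Finset.mem_erase, and_comm]
      rw [he, Finset.card_erase_of_mem (by simp), card_hyperplane u₁ hu₁ 0]
    rw [Finset.sum_congr rfl (fun v _ => hb0), Finset.sum_const, hA0, smul_eq_mul, mul_one]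
  · -- exactly 2 zeros : impossible
    have hset : {c ∈ {c | ∃ (l : (Fin m → F) →ₗ[F] F), l ≠ 0 ∧ ∃ b : F, c = fun x => l x + b} |
        {x ∈ ({0, u₁, u₂} : Set (Fin m → F)) | c x = 0}.ncard = 2} = ∅ := by
      ext c0
      simp only [Set.mem_setOf_eq, Set.mem_empty_iff_false, iff_false, not_and]
      intro hc0 h2
      obtain ⟨p, hp, rfl⟩ := (hNCmem _).mp hc0
      rw [hzero p] at h2
      exact (indicator_cases t _ p.2 ht0 ht1).2.1 h2
    rw [hset, Set.ncard_empty]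
  · -- exactly 1 zero
    have hset : {c ∈ {c | ∃ (l : (Fin m → F) →ₗ[F] F), l ≠ 0 ∧ ∃ b : F, c = fun x => l x + b} |
        {x ∈ ({0, u₁, u₂} : Set (Fin m → F)) | c x = 0}.ncard = 1}
        = Φ '' {p | (∑ i, p.1 i * u₁ i) ≠ 0 ∧ (p.2 = 0 ∨ p.2 = -(∑ i, p.1 i * u₁ i)
            ∨ p.2 = -(t * ∑ i, p.1 i * u₁ i))} := by
      ext c0
      simp only [Set.mem_setOf_eq, Set.mem_image]
      constructor
      · rintro ⟨hc0, h1⟩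
        obtain ⟨p, hp, rfl⟩ := (hNCmem _).mp hc0
        rw [hzero p] at h1
        obtain ⟨hA, hd⟩ := (indicator_cases t _ p.2 ht0 ht1).2.2.1.mp h1
        exact ⟨p, ⟨hA, hd⟩, rfl⟩
      · rintro ⟨p, ⟨hA, hd⟩, rfl⟩
        have hp : p.1 ≠ 0 := by
          intro h0; apply hA; rw [h0]; simp
        refine ⟨(hNCmem _).mpr ⟨p, hp, rfl⟩, ?_⟩
        rw [hzero p]
        exact (indicator_cases t _ p.2 ht0 ht1).2.2.1.mpr ⟨hA, hd⟩
    rw [hset, Set.ncard_image_of_injective _ hΦinj]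
    have hco : {p : (Fin m → F) × F | (∑ i, p.1 i * u₁ i) ≠ 0 ∧ (p.2 = 0
          ∨ p.2 = -(∑ i, p.1 i * u₁ i) ∨ p.2 = -(t * ∑ i, p.1 i * u₁ i))}
        = ↑(Finset.univ.filter (fun p : (Fin m → F) × F => (∑ i, p.1 i * u₁ i) ≠ 0
            ∧ (p.2 = 0 ∨ p.2 = -(∑ i, p.1 i * u₁ i) ∨ p.2 = -(t * ∑ i, p.1 i * u₁ i)))) := by
      ext p; simp
    rw [hco, Set.ncard_coe_finset,
      card_filter_prod (fun v : Fin m → F => (∑ i, v i * u₁ i) ≠ 0)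
        (fun v b => b = 0 ∨ b = -(∑ i, v i * u₁ i) ∨ b = -(t * ∑ i, v i * u₁ i))]
    have hinner : ∀ v ∈ Finset.univ.filter (fun v : Fin m → F => (∑ i, v i * u₁ i) ≠ 0),
        (Finset.univ.filter (fun b : F => b = 0 ∨ b = -(∑ i, v i * u₁ i)
          ∨ b = -(t * ∑ i, v i * u₁ i))).card = 3 := by
      intro v hv
      rw [Finset.mem_filter] at hv
      have ha : (∑ i, v i * u₁ i) ≠ 0 := hv.2
      have hf : Finset.univ.filter (fun b : F => b = 0 ∨ b = -(∑ i, v i * u₁ i)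
          ∨ b = -(t * ∑ i, v i * u₁ i))
          = {0, -(∑ i, v i * u₁ i), -(t * ∑ i, v i * u₁ i)} := by
        ext b; simp
      rw [hf]
      rw [Finset.card_insert_of_notMem, Finset.card_insert_of_notMem,
        Finset.card_singleton]
      · simp only [Finset.mem_singleton]
        intro h
        apply ht1
        have h' : (∑ i, v i * u₁ i) = t * (∑ i, v i * u₁ i) := by linear_combination -h
        field_simp at h'
        exact h'.symm
      · simp only [Finset.mem_insert, Finset.mem_singleton]
        push_neg
        constructor
        · intro h; exact ha (by linear_combination h)
        · intro h
          exact (mul_ne_zero ht0 ha) (by linear_combination h)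
    have houter : (Finset.univ.filter
        (fun v : Fin m → F => (∑ i, v i * u₁ i) ≠ 0)).card = c ^ m - c ^ (m - 1) := by
      rw [Finset.filter_not, Finset.card_sdiff_of_subset (Finset.filter_subset _ _),
        card_hyperplane u₁ hu₁ 0, Finset.card_univ]
      simp [Fintype.card_fun]
      rfl
    rw [Finset.sum_congr rfl hinner, Finset.sum_const, houter, smul_eq_mul]
    have h1 : c ^ (m - 1) ≤ c ^ (m - 1) * c := Nat.le_mul_of_pos_right _ hc1
    zify [h1, hc1, hqm]
    ring
  · -- no zeros
    have hset : {c ∈ {c | ∃ (l : (Fin m → F) →ₗ[F] F), l ≠ 0 ∧ ∃ b : F, c = fun x => l x + b} |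
        {x ∈ ({0, u₁, u₂} : Set (Fin m → F)) | c x = 0}.ncard = 0}
        = Φ '' {p | ((p.1 ≠ 0 ∧ (∑ i, p.1 i * u₁ i) = 0) ∧ p.2 ≠ 0)
            ∨ ((∑ i, p.1 i * u₁ i) ≠ 0 ∧ ¬(p.2 = 0 ∨ p.2 = -(∑ i, p.1 i * u₁ i)
              ∨ p.2 = -(t * ∑ i, p.1 i * u₁ i)))} := by
      ext c0
      simp only [Set.mem_setOf_eq, Set.mem_image]
      constructor
      · rintro ⟨hc0, h0⟩
        obtain ⟨p, hp, rfl⟩ := (hNCmem _).mp hc0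
        rw [hzero p] at h0
        rcases (indicator_cases t _ p.2 ht0 ht1).2.2.2.mp h0 with ⟨hA, hb⟩ | ⟨hA, hb, hb1, hb2⟩
        · exact ⟨p, Or.inl ⟨⟨hp, hA⟩, hb⟩, rfl⟩
        · exact ⟨p, Or.inr ⟨hA, by push_neg; exact ⟨hb, hb1, hb2⟩⟩, rfl⟩
      · rintro ⟨p, hP, rfl⟩
        have hp : p.1 ≠ 0 := by
          rcases hP with ⟨⟨hp, _⟩, _⟩ | ⟨hA, _⟩
          · exact hp
          · intro h0; apply hA; rw [h0]; simp
        refine ⟨(hNCmem _).mpr ⟨p, hp, rfl⟩, ?_⟩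
        rw [hzero p]
        apply (indicator_cases t _ p.2 ht0 ht1).2.2.2.mpr
        rcases hP with ⟨⟨_, hA⟩, hb⟩ | ⟨hA, hb⟩
        · exact Or.inl ⟨hA, hb⟩
        · push_neg at hb
          exact Or.inr ⟨hA, hb.1, hb.2.1, hb.2.2⟩
    rw [hset, Set.ncard_image_of_injective _ hΦinj]
    have hco : {p : (Fin m → F) × F | ((p.1 ≠ 0 ∧ (∑ i, p.1 i * u₁ i) = 0) ∧ p.2 ≠ 0)
          ∨ ((∑ i, p.1 i * u₁ i) ≠ 0 ∧ ¬(p.2 = 0 ∨ p.2 = -(∑ i, p.1 i * u₁ i)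
            ∨ p.2 = -(t * ∑ i, p.1 i * u₁ i)))}
        = ↑(Finset.univ.filter (fun p : (Fin m → F) × F =>
            ((p.1 ≠ 0 ∧ (∑ i, p.1 i * u₁ i) = 0) ∧ p.2 ≠ 0)
            ∨ ((∑ i, p.1 i * u₁ i) ≠ 0 ∧ ¬(p.2 = 0 ∨ p.2 = -(∑ i, p.1 i * u₁ i)
              ∨ p.2 = -(t * ∑ i, p.1 i * u₁ i))))) := by
      ext p; simp
    rw [hco, Set.ncard_coe_finset]
    rw [Finset.filter_or, Finset.card_union_of_disjoint]
    · rw [card_filter_prod (fun v : Fin m → F => v ≠ 0 ∧ (∑ i, v i * u₁ i) = 0)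
          (fun _ b => b ≠ 0),
        card_filter_prod (fun v : Fin m → F => (∑ i, v i * u₁ i) ≠ 0)
          (fun v b => ¬(b = 0 ∨ b = -(∑ i, v i * u₁ i) ∨ b = -(t * ∑ i, v i * u₁ i)))]
      have hbne : (Finset.univ.filter (fun b : F => b ≠ 0)).card = c - 1 := by
        rw [Finset.filter_ne', Finset.card_erase_of_mem (Finset.mem_univ _), Finset.card_univ]
      have hA0 : (Finset.univ.filter
          (fun v : Fin m → F => v ≠ 0 ∧ (∑ i, v i * u₁ i) = 0)).card = c ^ (m - 1) - 1 := by
        have he : Finset.univ.filter (fun v : Fin m → F => v ≠ 0 ∧ (∑ i, v i * u₁ i) = 0)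
            = (Finset.univ.filter (fun v : Fin m → F => (∑ i, v i * u₁ i) = 0)).erase 0 := by
          ext v; simp [Finset.mem_erase, and_comm]
        rw [he, Finset.card_erase_of_mem (by simp), card_hyperplane u₁ hu₁ 0]
      have hinner : ∀ v ∈ Finset.univ.filter (fun v : Fin m → F => (∑ i, v i * u₁ i) ≠ 0),
          (Finset.univ.filter (fun b : F => ¬(b = 0 ∨ b = -(∑ i, v i * u₁ i)
            ∨ b = -(t * ∑ i, v i * u₁ i)))).card = c - 3 := by
        intro v hv
        rw [Finset.mem_filter] at hv
        have ha : (∑ i, v i * u₁ i) ≠ 0 := hv.2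
        rw [Finset.filter_not, Finset.card_sdiff_of_subset (Finset.filter_subset _ _), Finset.card_univ]
        have hf : Finset.univ.filter (fun b : F => b = 0 ∨ b = -(∑ i, v i * u₁ i)
            ∨ b = -(t * ∑ i, v i * u₁ i))
            = {0, -(∑ i, v i * u₁ i), -(t * ∑ i, v i * u₁ i)} := by
          ext b; simp
        rw [hf]
        rw [Finset.card_insert_of_notMem, Finset.card_insert_of_notMem,
          Finset.card_singleton]
        · simp only [Finset.mem_singleton]
          intro h
          apply ht1
          have h' : (∑ i, v i * u₁ i) = t * (∑ i, v i * u₁ i) := by linear_combination -h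
          field_simp at h'
          exact h'.symm
        · simp only [Finset.mem_insert, Finset.mem_singleton]
          push_neg
          constructor
          · intro h; exact ha (by linear_combination h)
          · intro h
            exact (mul_ne_zero ht0 ha) (by linear_combination h)
      have houter : (Finset.univ.filter
          (fun v : Fin m → F => (∑ i, v i * u₁ i) ≠ 0)).card = c ^ m - c ^ (m - 1) := by
        rw [Finset.filter_not, Finset.card_sdiff_of_subset (Finset.filter_subset _ _),
          card_hyperplane u₁ hu₁ 0, Finset.card_univ]
        simp [Fintype.card_fun]
        rfl
      rw [Finset.sum_congr rfl (fun v _ => hbne), Finset.sum_const, hA0, smul_eq_mul,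
        Finset.sum_congr rfl hinner, Finset.sum_const, houter, smul_eq_mul]
      have h3Q : c ^ (m - 1) * 3 ≤ c ^ (m - 1) * c := Nat.mul_le_mul_left _ hq3
      have h2' : 2 * c ^ (m - 1) ≤ c ^ (m - 1) * c := le_trans (by linarith [hQ1]) h3Q
      have h4' : 1 ≤ c ^ (m - 1) * c - 2 * c ^ (m - 1) := by
        have hQle : c ^ (m - 1) ≤ c ^ (m - 1) * c - 2 * c ^ (m - 1) :=
          Nat.le_sub_of_add_le (by linarith [h3Q])
        exact le_trans hQ1 hQle
      have h1 : c ^ (m - 1) ≤ c ^ (m - 1) * c := Nat.le_mul_of_pos_right _ hc1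
      rw [hqm]
      zify [hc1, hq3, hQ1, h1, h2', h4']
      ring
    · rw [Finset.disjoint_left]
      intro p hp1 hp2
      rw [Finset.mem_filter] at hp1 hp2
      exact hp2.2.1 hp1.2.1.2
end

section
/- Suppose q ≥ 3 and m ≥ 2 and let ℓ = (q-1)q^{m-1}. Then the shell C_ℓ of C = RM_q(1,m) is not a combinatorial 3-design: there exist two 3-element subsets T₁, T₂ of V such that the number of codewords of weight ℓ whose support contains T₁ differs from the number whose support contains T₂. -/
open Finset

section Aux
variable {F : Type} [Field F] {m : ℕ}

/-- dot product -/
def dotF (w x : Fin m → F) : F := ∑ i, x i * w i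

def PhiF (w : Fin m → F) (b : F) : (Fin m → F) → F := fun x => dotF w x + b

lemma dotF_zero (w : Fin m → F) : dotF w 0 = 0 := by simp [dotF]

lemma dotF_single (w : Fin m → F) (i : Fin m) (a : F) : dotF w (Pi.single i a) = a * w i := by
  classical
  unfold dotF
  rw [Finset.sum_eq_single i]
  · simp
  · intro j _ hj; simp [Pi.single_apply, hj]
  · simp

lemma dotF_smul (w x : Fin m → F) (a : F) : dotF w (a • x) = a * dotF w x := by
  simp [dotF, Finset.mul_sum, mul_assoc]

lemma PhiF_inj : Function.Injective (fun p : (Fin m → F) × F => PhiF p.1 p.2) := by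
  rintro ⟨w, b⟩ ⟨w', b'⟩ h
  simp only [PhiF] at h
  have h0 : dotF w 0 + b = dotF w' 0 + b' := congrFun h 0
  rw [dotF_zero, dotF_zero, zero_add, zero_add] at h0
  subst h0
  have hw : w = w' := by
    funext i
    have := congrFun h (Pi.single i 1)
    simp only [PhiF, dotF_single] at this
    simpa using this
  simp [hw]

/-- the dot product as an additive hom in x -/
def dotHom (w : Fin m → F) : (Fin m → F) →+ F where
  toFun x := dotF w x
  map_zero' := dotF_zero w
  map_add' x y := by simp [dotF, add_mul, Finset.sum_add_distrib]

lemma dotHom_surj {w : Fin m → F} (hw : w ≠ 0) : Function.Surjective (dotHom w) := by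
  obtain ⟨j, hj⟩ : ∃ j, w j ≠ 0 := by
    by_contra h
    push_neg at h
    exact hw (funext fun j => h j)
  intro t
  refine ⟨Pi.single j (t / w j), ?_⟩
  show dotF w (Pi.single j (t / w j)) = t
  rw [dotF_single, div_mul_cancel₀ _ hj]

end Aux

section Count

lemma fiber_ncard {G H : Type} [AddCommGroup G] [AddCommGroup H] [Fintype G] [Fintype H]
    (g : G →+ H) (hg : Function.Surjective g) (v : H) :
    Fintype.card G = Fintype.card H * ({x : G | g x = v} : Set G).ncard := by
  classical
  obtain ⟨x₀, hx₀⟩ := hg v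
  have himg : ({x : G | g x = v} : Set G) = (fun y => y + x₀) '' {x : G | g x = 0} := by
    ext x
    simp only [Set.mem_setOf_eq, Set.mem_image]
    constructor
    · intro hx; exact ⟨x - x₀, by simp [map_sub, hx, hx₀], by abel⟩
    · rintro ⟨y, hy, rfl⟩; simp [map_add, hy, hx₀]
  have h1 : ({x : G | g x = v} : Set G).ncard = ({x : G | g x = 0} : Set G).ncard := by
    rw [himg, Set.ncard_image_of_injective _ (add_left_injective x₀)]
  rw [h1]
  have hker : ({x : G | g x = 0} : Set G).ncard = Nat.card g.ker := by
    rw [← Nat.card_coe_set_eq]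
    exact Nat.card_congr (Equiv.refl _)
  have hquot : Nat.card (G ⧸ g.ker) = Fintype.card H := by
    rw [Nat.card_congr (QuotientAddGroup.quotientKerEquivOfSurjective g hg).toEquiv]
    exact Nat.card_eq_fintype_card
  have := AddSubgroup.card_eq_card_quotient_mul_card_addSubgroup g.ker
  rw [hquot] at this
  rw [hker, ← Nat.card_eq_fintype_card (α := G), this]

lemma ncard_filter_eq {α : Type} [Fintype α] (p : α → Prop) [DecidablePred p] :
    {x | p x}.ncard = (univ.filter p).card := by
  classical
  rw [Set.ncard_eq_toFinset_card']
  congr 1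
  ext x
  simp

lemma count_comp {α β : Type} [Fintype α] [Fintype β] [DecidableEq β] (ψ : α → β) (k : ℕ)
    (hk : ∀ b, (univ.filter (fun a => ψ a = b)).card = k) (P : β → Prop) [DecidablePred P] :
    (univ.filter (fun a => P (ψ a))).card = (univ.filter P).card * k := by
  classical
  rw [Finset.card_eq_sum_card_fiberwise (f := ψ) (t := univ.filter P)
    (fun x hx => by simp at hx ⊢; exact hx)]
  rw [Finset.sum_congr rfl (fun b hb => ?_), Finset.sum_const, smul_eq_mul]
  simp only [Finset.mem_filter, Finset.mem_univ, true_and] at hb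
  rw [Finset.filter_filter]
  rw [← hk b]
  congr 1
  ext a
  simp only [Finset.mem_filter, Finset.mem_univ, true_and, and_iff_right_iff_imp]
  intro h; rw [h]; exact hb

lemma card_filter_prod_s8 {α β : Type} [Fintype α] [Fintype β] (p : α → β → Prop)
    [∀ a b, Decidable (p a b)] :
    (univ.filter fun x : α × β => p x.1 x.2).card = ∑ b : β, (univ.filter fun a => p a b).card := by
  classical
  rw [Finset.card_filter, Fintype.sum_prod_type_right]
  exact Finset.sum_congr rfl fun b _ => (Finset.card_filter _ _).symm

lemma card_filter_ne_ne {α : Type} [Fintype α] [DecidableEq α] (a₁ a₂ : α) (h : a₁ ≠ a₂) :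
    (univ.filter fun u => u ≠ a₁ ∧ u ≠ a₂).card = Fintype.card α - 2 := by
  have : (univ.filter fun u => u ≠ a₁ ∧ u ≠ a₂) = (univ.erase a₁).erase a₂ := by
    ext u; simp [and_comm, Finset.mem_erase]
  rw [this, Finset.card_erase_of_mem (by simp [h.symm]), Finset.card_erase_of_mem (by simp),
    Finset.card_univ]
  omega

lemma card_filter_ne {α : Type} [Fintype α] [DecidableEq α] (a : α) :
    (univ.filter fun u => u ≠ a).card = Fintype.card α - 1 := by
  rw [Finset.filter_ne', Finset.card_erase_of_mem (Finset.mem_univ a), Finset.card_univ]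

end Count

section Wt
variable {F : Type} [Field F] [Fintype F] {m : ℕ}

lemma wt_PhiF (hm : 1 ≤ m) {w : Fin m → F} (hw : w ≠ 0) (b : F) :
    ({x | PhiF w b x ≠ 0} : Set (Fin m → F)).ncard
      = (Fintype.card F - 1) * Fintype.card F ^ (m - 1) := by
  classical
  set q := Fintype.card F with hqdef
  have hq1 : 1 ≤ q := Fintype.card_pos
  have hfib := fiber_ncard (dotHom w) (dotHom_surj hw) (-b)
  have hcard : Fintype.card (Fin m → F) = q ^ m := by
    simp [hqdef, Fintype.card_fun]
  set f := ({x | dotHom w x = -b} : Set (Fin m → F)).ncard with hfdef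
  have hf : q ^ m = q * f := by rw [← hcard]; exact hfib
  have hfval : f = q ^ (m - 1) := by
    have h2 : q * f = q * q ^ (m - 1) := by
      rw [← hf, ← pow_succ']
      congr 1
      omega
    exact Nat.eq_of_mul_eq_mul_left (by omega) h2
  have hcompl : ({x | PhiF w b x ≠ 0} : Set (Fin m → F))
      = ({x | dotHom w x = -b} : Set (Fin m → F))ᶜ := by
    ext x
    simp only [Set.mem_compl_iff, Set.mem_setOf_eq, PhiF]
    constructor
    · intro h h'
      apply h
      show dotF w x + b = 0
      have : dotF w x = dotHom w x := rfl
      rw [this, h']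
      ring
    · intro h h'
      apply h
      show dotF w x = -b
      have hx : dotF w x + b = 0 := h'
      linear_combination hx
  have hadd := Set.ncard_add_ncard_compl ({x | dotHom w x = -b} : Set (Fin m → F))
  rw [← hcompl] at hadd
  have hnatcard : Nat.card (Fin m → F) = q ^ m := by
    rw [Nat.card_eq_fintype_card, hcard]
  rw [hnatcard, ← hfdef, hfval] at hadd
  have hqm : q ^ m = q * q ^ (m - 1) := by
    rw [← pow_succ']; congr 1; omega
  have : (q - 1) * q ^ (m - 1) = q ^ m - q ^ (m - 1) := by
    rw [Nat.sub_one_mul, ← hqm]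
  omega

end Wt

section Shell
variable {F : Type} [Field F] [Fintype F] {m : ℕ}

lemma dotF_zero' (x : Fin m → F) : dotF (0 : Fin m → F) x = 0 := by simp [dotF]

lemma shell_eq (hm : 1 ≤ m) (hq3 : 3 ≤ Fintype.card F)
    (C : Set ((Fin m → F) → F))
    (hC : C = {c | ∃ (l : (Fin m → F) →ₗ[F] F) (b : F), c = fun x => l x + b})
    (wt : ((Fin m → F) → F) → ℕ)
    (hwt : ∀ c, wt c = {x | c x ≠ 0}.ncard)
    (ℓ : ℕ) (hℓ : ℓ = (Fintype.card F - 1) * Fintype.card F ^ (m - 1))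
    (T : Finset (Fin m → F)) :
    {c ∈ C | wt c = ℓ ∧ ∀ x ∈ T, c x ≠ 0}
      = (fun p : (Fin m → F) × F => PhiF p.1 p.2) ''
          {p : (Fin m → F) × F | p.1 ≠ 0 ∧ ∀ x ∈ T, PhiF p.1 p.2 x ≠ 0} := by
  classical
  set q := Fintype.card F with hqdef
  have hq0 : 0 < q := by omega
  have hℓpos : 0 < ℓ := by
    rw [hℓ]
    exact Nat.mul_pos (by omega) (pow_pos hq0 _)
  have hℓlt : ℓ < q ^ m := by
    rw [hℓ]
    have hqm : q ^ m = q * q ^ (m - 1) := by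
      rw [← pow_succ']; congr 1; omega
    rw [hqm]
    exact (Nat.mul_lt_mul_right (pow_pos hq0 _)).mpr (by omega)
  ext cw
  simp only [Set.mem_setOf_eq, Set.mem_image, hC]
  constructor
  · rintro ⟨⟨l, b, rfl⟩, hwtc, hT⟩
    set w : Fin m → F := fun i => l (fun j => if i = j then 1 else 0) with hwdef
    have hcw : (fun x => l x + b) = PhiF w b := by
      funext x
      simp only [PhiF, dotF]
      congr 1
      rw [LinearMap.pi_apply_eq_sum_univ l x]
      exact Finset.sum_congr rfl fun i _ => by rw [smul_eq_mul]
    have hw : w ≠ 0 := by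
      intro hw0
      rw [hcw, hwt, hw0] at hwtc
      by_cases hb : b = 0
      · have : {x : Fin m → F | PhiF 0 b x ≠ 0} = ∅ := by
          ext x; simp [PhiF, dotF_zero', hb]
        rw [this] at hwtc
        simp at hwtc
        omega
      · have : {x : Fin m → F | PhiF 0 b x ≠ 0} = Set.univ := by
          ext x; simp [PhiF, dotF_zero', hb]
        rw [this, Set.ncard_univ, Nat.card_eq_fintype_card] at hwtc
        rw [Fintype.card_fun, Fintype.card_fin, ← hqdef] at hwtc
        omega
    refine ⟨(w, b), ⟨hw, ?_⟩, hcw.symm⟩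
    intro x hx
    rw [← hcw]
    exact hT x hx
  · rintro ⟨⟨w, b⟩, ⟨hw, hT⟩, rfl⟩
    refine ⟨⟨∑ i, w i • LinearMap.proj i, b, ?_⟩, ?_, ?_⟩
    · funext x
      simp only [PhiF, dotF, LinearMap.sum_apply, LinearMap.smul_apply, LinearMap.proj_apply,
        smul_eq_mul]
      congr 1
      exact Finset.sum_congr rfl fun i _ => mul_comm _ _
    · rw [hwt]
      show ({x | PhiF w b x ≠ 0} : Set (Fin m → F)).ncard = ℓ
      rw [wt_PhiF hm hw b, hℓ]
    · exact hT

end Shell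

section MainCount
variable {F : Type} [Field F] [Fintype F] {m : ℕ}

def psi1 (i₀ : Fin m) : ((Fin m → F) × F) →+ (F × F) where
  toFun p := (p.1 i₀, p.2)
  map_zero' := rfl
  map_add' _ _ := rfl

lemma psi1_surj (i₀ : Fin m) : Function.Surjective (psi1 (F := F) i₀) := by
  rintro ⟨u, b⟩
  exact ⟨(Pi.single i₀ u, b), by simp [psi1]⟩

lemma fiber1 (hm : 1 ≤ m) (i₀ : Fin m) (v : F × F) :
    ({p : (Fin m → F) × F | (p.1 i₀, p.2) = v}).ncard = Fintype.card F ^ (m - 1) := by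
  classical
  set q := Fintype.card F with hqdef
  have hq0 : 0 < q := Fintype.card_pos
  have h := fiber_ncard (psi1 (F := F) i₀) (psi1_surj i₀) v
  have hG : Fintype.card ((Fin m → F) × F) = q ^ m * q := by
    simp [Fintype.card_prod, Fintype.card_fun, hqdef]
  have hH : Fintype.card (F × F) = q * q := by simp [Fintype.card_prod, hqdef]
  rw [hG, hH] at h
  have hpow : q ^ m * q = (q * q) * q ^ (m - 1) := by
    have : q ^ m = q * q ^ (m - 1) := by rw [← pow_succ']; congr 1; omega
    rw [this]; ring
  rw [hpow] at h
  exact (Nat.eq_of_mul_eq_mul_left (show 0 < q * q by positivity) h).symm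

def psi2 (i₀ i₁ : Fin m) : ((Fin m → F) × F) →+ ((F × F) × F) where
  toFun p := ((p.1 i₀, p.1 i₁), p.2)
  map_zero' := rfl
  map_add' _ _ := rfl

lemma psi2_surj (i₀ i₁ : Fin m) (hi : i₀ ≠ i₁) :
    Function.Surjective (psi2 (F := F) i₀ i₁) := by
  classical
  rintro ⟨⟨u, v⟩, b⟩
  refine ⟨(Pi.single i₀ u + Pi.single i₁ v, b), ?_⟩
  simp [psi2, Pi.single_eq_of_ne hi, Pi.single_eq_of_ne hi.symm]

lemma fiber2 (hm : 2 ≤ m) (i₀ i₁ : Fin m) (hi : i₀ ≠ i₁) (v : (F × F) × F) :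
    ({p : (Fin m → F) × F | ((p.1 i₀, p.1 i₁), p.2) = v}).ncard = Fintype.card F ^ (m - 2) := by
  classical
  set q := Fintype.card F with hqdef
  have hq0 : 0 < q := Fintype.card_pos
  have h := fiber_ncard (psi2 (F := F) i₀ i₁) (psi2_surj i₀ i₁ hi) v
  have hG : Fintype.card ((Fin m → F) × F) = q ^ m * q := by
    simp [Fintype.card_prod, Fintype.card_fun, hqdef]
  have hH : Fintype.card ((F × F) × F) = q * q * q := by simp [Fintype.card_prod, hqdef]
  rw [hG, hH] at h
  have hpow : q ^ m * q = (q * q * q) * q ^ (m - 2) := by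
    have : q ^ m = q * q * q ^ (m - 2) := by
      rw [mul_assoc, ← pow_succ' (n := m - 2), ← pow_succ']
      congr 1
      omega
    rw [this]; ring
  rw [hpow] at h
  exact (Nat.eq_of_mul_eq_mul_left (show 0 < q * q * q by positivity) h).symm

end MainCount

section Inner
variable {F : Type} [Field F] [Fintype F]

lemma card_filter_pair {α β : Type} [Fintype α] [Fintype β] (p : α → Prop) (q : β → Prop)
    [DecidablePred p] [DecidablePred q] :
    (univ.filter fun x : α × β => p x.1 ∧ q x.2).card
      = (univ.filter p).card * (univ.filter q).card := by
  rw [← Finset.univ_product_univ, Finset.filter_product, Finset.card_product]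

lemma inner1 {cc : F} (hc0 : cc ≠ 0) (hc1 : cc ≠ 1) :
    ({x : F × F | x.2 ≠ 0 ∧ x.1 + x.2 ≠ 0 ∧ cc * x.1 + x.2 ≠ 0}).ncard
      = (Fintype.card F - 1) * (Fintype.card F - 2) := by
  classical
  set q := Fintype.card F with hqdef
  rw [ncard_filter_eq]
  show (univ.filter fun x : F × F =>
    (fun u b => b ≠ 0 ∧ u + b ≠ 0 ∧ cc * u + b ≠ 0) x.1 x.2).card = _
  rw [card_filter_prod_s8 (fun u b : F => b ≠ 0 ∧ u + b ≠ 0 ∧ cc * u + b ≠ 0)]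
  have key : ∀ u b : F, cc * u + b = 0 ↔ u = -(cc⁻¹ * b) := by
    intro u b
    constructor
    · intro h
      have h3 : cc * u = -b := by linear_combination h
      calc u = cc⁻¹ * (cc * u) := (inv_mul_cancel_left₀ hc0 u).symm
        _ = cc⁻¹ * -b := by rw [h3]
        _ = -(cc⁻¹ * b) := by ring
    · intro h
      rw [h]
      have : cc * -(cc⁻¹ * b) = -b := by
        rw [mul_neg, mul_inv_cancel_left₀ hc0]
      rw [this]
      ring
  have hb : ∀ b : F, (univ.filter fun u : F => b ≠ 0 ∧ u + b ≠ 0 ∧ cc * u + b ≠ 0).card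
      = if b = 0 then 0 else (q - 2) := by
    intro b
    by_cases hb : b = 0
    · simp [hb]
    · rw [if_neg hb]
      have hpred : ∀ u ∈ (univ : Finset F),
          (b ≠ 0 ∧ u + b ≠ 0 ∧ cc * u + b ≠ 0) ↔ (u ≠ -b ∧ u ≠ -(cc⁻¹ * b)) := by
        intro u _
        constructor
        · rintro ⟨-, h1, h2⟩
          constructor
          · intro h; exact h1 (by rw [h]; ring)
          · intro h; exact h2 ((key u b).mpr h)
        · rintro ⟨h1, h2⟩
          refine ⟨hb, ?_, ?_⟩
          · intro h; exact h1 (eq_neg_of_add_eq_zero_left h)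
          · intro h; exact h2 ((key u b).mp h)
      rw [Finset.filter_congr hpred]
      rw [card_filter_ne_ne]
      intro h
      apply hc1
      have h' : b = cc⁻¹ * b := by linear_combination -h
      have h2 : cc * b = 1 * b := by
        rw [one_mul]
        conv_lhs => rw [h']
        rw [mul_inv_cancel_left₀ hc0]
      exact mul_right_cancel₀ hb h2
  rw [Finset.sum_congr rfl (fun b _ => hb b), Finset.sum_ite, Finset.sum_const, Finset.sum_const]
  have h1 : (univ.filter fun b : F => ¬ b = 0).card = q - 1 := card_filter_ne 0
  rw [h1]
  simp

lemma inner2 :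
    ({x : (F × F) × F | x.2 ≠ 0 ∧ x.1.1 + x.2 ≠ 0 ∧ x.1.2 + x.2 ≠ 0}).ncard
      = (Fintype.card F - 1) * ((Fintype.card F - 1) * (Fintype.card F - 1)) := by
  classical
  set q := Fintype.card F with hqdef
  rw [ncard_filter_eq]
  show (univ.filter fun x : (F × F) × F =>
    (fun y b => b ≠ 0 ∧ y.1 + b ≠ 0 ∧ y.2 + b ≠ 0) x.1 x.2).card = _
  rw [card_filter_prod_s8 (fun y : F × F => fun b : F => b ≠ 0 ∧ y.1 + b ≠ 0 ∧ y.2 + b ≠ 0)]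
  have hb : ∀ b : F, (univ.filter fun y : F × F => b ≠ 0 ∧ y.1 + b ≠ 0 ∧ y.2 + b ≠ 0).card
      = if b = 0 then 0 else (q - 1) * (q - 1) := by
    intro b
    by_cases hb : b = 0
    · simp [hb]
    · rw [if_neg hb]
      have hpred : ∀ y ∈ (univ : Finset (F × F)),
          (b ≠ 0 ∧ y.1 + b ≠ 0 ∧ y.2 + b ≠ 0) ↔ ((fun u => u ≠ -b) y.1 ∧ (fun u => u ≠ -b) y.2) := by
        intro y _
        simp only
        constructor
        · rintro ⟨-, h1, h2⟩
          exact ⟨fun h => h1 (by rw [h]; ring), fun h => h2 (by rw [h]; ring)⟩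
        · rintro ⟨h1, h2⟩
          exact ⟨hb, fun h => h1 (eq_neg_of_add_eq_zero_left h),
            fun h => h2 (eq_neg_of_add_eq_zero_left h)⟩
      rw [Finset.filter_congr hpred]
      have h2 := card_filter_pair (fun u : F => u ≠ -b) (fun u : F => u ≠ -b)
      rw [card_filter_ne] at h2
      convert h2 using 2
  rw [Finset.sum_congr rfl (fun b _ => hb b), Finset.sum_ite, Finset.sum_const, Finset.sum_const]
  have h1 : (univ.filter fun b : F => ¬ b = 0).card = q - 1 := card_filter_ne 0
  rw [h1]
  simp

end Inner

section TotalCount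
variable {F : Type} [Field F] [Fintype F] {m : ℕ}

lemma countT1 (hm : 2 ≤ m) {cc : F} (hc0 : cc ≠ 0) (hc1 : cc ≠ 1) (i₀ : Fin m) :
    ({p : (Fin m → F) × F |
        p.1 ≠ 0 ∧ (p.2 ≠ 0 ∧ p.1 i₀ + p.2 ≠ 0 ∧ cc * p.1 i₀ + p.2 ≠ 0)}).ncard
      + (Fintype.card F - 1)
      = ((Fintype.card F - 1) * (Fintype.card F - 2)) * Fintype.card F ^ (m - 1) := by
  classical
  set q := Fintype.card F with hqdef
  rw [ncard_filter_eq]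
  have hM : (univ.filter fun p : (Fin m → F) × F =>
      p.2 ≠ 0 ∧ p.1 i₀ + p.2 ≠ 0 ∧ cc * p.1 i₀ + p.2 ≠ 0).card
      = ((q - 1) * (q - 2)) * q ^ (m - 1) := by
    have hcc := count_comp (fun p : (Fin m → F) × F => (p.1 i₀, p.2)) (q ^ (m - 1))
        (fun v => by rw [← ncard_filter_eq]; exact fiber1 (by omega) i₀ v)
        (fun x : F × F => x.2 ≠ 0 ∧ x.1 + x.2 ≠ 0 ∧ cc * x.1 + x.2 ≠ 0)
    have hinner : (univ.filter fun x : F × F =>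
        x.2 ≠ 0 ∧ x.1 + x.2 ≠ 0 ∧ cc * x.1 + x.2 ≠ 0).card = (q - 1) * (q - 2) := by
      rw [← ncard_filter_eq]
      exact inner1 hc0 hc1
    rw [hinner] at hcc
    exact hcc
  have hsplit := Finset.card_filter_add_card_filter_not
    (s := (univ : Finset ((Fin m → F) × F)).filter fun p =>
      p.2 ≠ 0 ∧ p.1 i₀ + p.2 ≠ 0 ∧ cc * p.1 i₀ + p.2 ≠ 0) (p := fun p => p.1 ≠ 0)
  have e1 : (((univ : Finset ((Fin m → F) × F)).filter fun p =>
        p.2 ≠ 0 ∧ p.1 i₀ + p.2 ≠ 0 ∧ cc * p.1 i₀ + p.2 ≠ 0).filter fun p => p.1 ≠ 0)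
      = univ.filter (fun p : (Fin m → F) × F =>
        p.1 ≠ 0 ∧ (p.2 ≠ 0 ∧ p.1 i₀ + p.2 ≠ 0 ∧ cc * p.1 i₀ + p.2 ≠ 0)) := by
    ext p
    simp only [Finset.mem_filter, Finset.mem_univ, true_and]
    tauto
  have e2 : (((univ : Finset ((Fin m → F) × F)).filter fun p =>
        p.2 ≠ 0 ∧ p.1 i₀ + p.2 ≠ 0 ∧ cc * p.1 i₀ + p.2 ≠ 0).filter fun p => ¬ p.1 ≠ 0).card
      = q - 1 := by
    have himg : (((univ : Finset ((Fin m → F) × F)).filter fun p =>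
          p.2 ≠ 0 ∧ p.1 i₀ + p.2 ≠ 0 ∧ cc * p.1 i₀ + p.2 ≠ 0).filter fun p => ¬ p.1 ≠ 0)
        = (univ.filter fun b : F => ¬ b = 0).image (fun b => ((0 : Fin m → F), b)) := by
      ext p
      simp only [Finset.mem_filter, Finset.mem_univ, true_and, Finset.mem_image, not_not]
      constructor
      · rintro ⟨hQp, h0⟩
        exact ⟨p.2, hQp.1, by rw [← h0]⟩
      · rintro ⟨b, hb, rfl⟩
        refine ⟨⟨hb, ?_, ?_⟩, rfl⟩
        · simpa using hb
        · simpa using hb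
    rw [himg, Finset.card_image_of_injective _
      (fun a b h => by simpa using (Prod.ext_iff.mp h).2)]
    exact card_filter_ne 0
  rw [e1] at hsplit
  rw [e2] at hsplit
  rw [hM] at hsplit
  exact hsplit

lemma countT2 (hm : 2 ≤ m) (i₀ i₁ : Fin m) (hi : i₀ ≠ i₁) :
    ({p : (Fin m → F) × F |
        p.1 ≠ 0 ∧ (p.2 ≠ 0 ∧ p.1 i₀ + p.2 ≠ 0 ∧ p.1 i₁ + p.2 ≠ 0)}).ncard
      + (Fintype.card F - 1)
      = ((Fintype.card F - 1) * ((Fintype.card F - 1) * (Fintype.card F - 1)))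
        * Fintype.card F ^ (m - 2) := by
  classical
  set q := Fintype.card F with hqdef
  rw [ncard_filter_eq]
  have hM : (univ.filter fun p : (Fin m → F) × F =>
      p.2 ≠ 0 ∧ p.1 i₀ + p.2 ≠ 0 ∧ p.1 i₁ + p.2 ≠ 0).card
      = ((q - 1) * ((q - 1) * (q - 1))) * q ^ (m - 2) := by
    have hcc := count_comp (fun p : (Fin m → F) × F => ((p.1 i₀, p.1 i₁), p.2)) (q ^ (m - 2))
        (fun v => by rw [← ncard_filter_eq]; exact fiber2 hm i₀ i₁ hi v)
        (fun x : (F × F) × F => x.2 ≠ 0 ∧ x.1.1 + x.2 ≠ 0 ∧ x.1.2 + x.2 ≠ 0)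
    have hinner : (univ.filter fun x : (F × F) × F =>
        x.2 ≠ 0 ∧ x.1.1 + x.2 ≠ 0 ∧ x.1.2 + x.2 ≠ 0).card = (q - 1) * ((q - 1) * (q - 1)) := by
      rw [← ncard_filter_eq]
      exact inner2
    rw [hinner] at hcc
    exact hcc
  have hsplit := Finset.card_filter_add_card_filter_not
    (s := (univ : Finset ((Fin m → F) × F)).filter fun p =>
      p.2 ≠ 0 ∧ p.1 i₀ + p.2 ≠ 0 ∧ p.1 i₁ + p.2 ≠ 0) (p := fun p => p.1 ≠ 0)
  have e1 : (((univ : Finset ((Fin m → F) × F)).filter fun p =>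
        p.2 ≠ 0 ∧ p.1 i₀ + p.2 ≠ 0 ∧ p.1 i₁ + p.2 ≠ 0).filter fun p => p.1 ≠ 0)
      = univ.filter (fun p : (Fin m → F) × F =>
        p.1 ≠ 0 ∧ (p.2 ≠ 0 ∧ p.1 i₀ + p.2 ≠ 0 ∧ p.1 i₁ + p.2 ≠ 0)) := by
    ext p
    simp only [Finset.mem_filter, Finset.mem_univ, true_and]
    tauto
  have e2 : (((univ : Finset ((Fin m → F) × F)).filter fun p =>
        p.2 ≠ 0 ∧ p.1 i₀ + p.2 ≠ 0 ∧ p.1 i₁ + p.2 ≠ 0).filter fun p => ¬ p.1 ≠ 0).card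
      = q - 1 := by
    have himg : (((univ : Finset ((Fin m → F) × F)).filter fun p =>
          p.2 ≠ 0 ∧ p.1 i₀ + p.2 ≠ 0 ∧ p.1 i₁ + p.2 ≠ 0).filter fun p => ¬ p.1 ≠ 0)
        = (univ.filter fun b : F => ¬ b = 0).image (fun b => ((0 : Fin m → F), b)) := by
      ext p
      simp only [Finset.mem_filter, Finset.mem_univ, true_and, Finset.mem_image, not_not]
      constructor
      · rintro ⟨hQp, h0⟩
        exact ⟨p.2, hQp.1, by rw [← h0]⟩
      · rintro ⟨b, hb, rfl⟩
        refine ⟨⟨hb, ?_, ?_⟩, rfl⟩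
        · simpa using hb
        · simpa using hb
    rw [himg, Finset.card_image_of_injective _
      (fun a b h => by simpa using (Prod.ext_iff.mp h).2)]
    exact card_filter_ne 0
  rw [e1] at hsplit
  rw [e2] at hsplit
  rw [hM] at hsplit
  exact hsplit

end TotalCount

/-- For `q ≥ 3` and `m ≥ 2`, the shell of weight `(q-1)q^(m-1)` of `RM_q(1,m)` is not
a combinatorial 3-design. -/
theorem stmt_8 (F : Type) [Field F] [Fintype F] (q m : ℕ) (hq : q = Fintype.card F)
    (hq3 : 3 ≤ q) (hm : 2 ≤ m)
    (C : Set ((Fin m → F) → F))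
    (hC : C = {c | ∃ (l : (Fin m → F) →ₗ[F] F) (b : F), c = fun x => l x + b})
    (wt : ((Fin m → F) → F) → ℕ)
    (hwt : ∀ c, wt c = {x | c x ≠ 0}.ncard)
    (ℓ : ℕ) (hℓ : ℓ = (q - 1) * q ^ (m - 1)) :
    ∃ T₁ T₂ : Finset (Fin m → F), T₁.card = 3 ∧ T₂.card = 3 ∧
      {c ∈ C | wt c = ℓ ∧ ∀ x ∈ T₁, c x ≠ 0}.ncard ≠
      {c ∈ C | wt c = ℓ ∧ ∀ x ∈ T₂, c x ≠ 0}.ncard := by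
  classical
  subst hq
  subst hℓ
  have hm1 : 0 < m := by omega
  set i₀ : Fin m := ⟨0, by omega⟩ with hi₀
  set i₁ : Fin m := ⟨1, by omega⟩ with hi₁
  have hi : i₀ ≠ i₁ := by
    intro h
    rw [hi₀, hi₁, Fin.mk.injEq] at h
    omega
  obtain ⟨cc, hc0, hc1⟩ : ∃ cc : F, cc ≠ 0 ∧ cc ≠ 1 := by
    have h2 : ({0, 1} : Finset F).card ≤ 2 := (Finset.card_insert_le _ _).trans (by simp)
    have hne : (Finset.univ \ ({0, 1} : Finset F)).Nonempty := by
      rw [← Finset.card_pos, Finset.card_sdiff_of_subset (Finset.subset_univ _), Finset.card_univ]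
      omega
    obtain ⟨cc, hcc⟩ := hne
    simp only [Finset.mem_sdiff, Finset.mem_insert, Finset.mem_singleton] at hcc
    exact ⟨cc, fun h => hcc.2 (Or.inl h), fun h => hcc.2 (Or.inr h)⟩
  set e₀ : Fin m → F := Pi.single i₀ 1 with he₀
  set e₁ : Fin m → F := Pi.single i₁ 1 with he₁
  have he₀i₀ : e₀ i₀ = 1 := by rw [he₀, Pi.single_eq_same]
  have he₁i₀ : e₁ i₀ = 0 := by rw [he₁, Pi.single_eq_of_ne hi]
  have h01 : (0 : Fin m → F) ≠ e₀ := by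
    intro h
    have := congrFun h i₀
    rw [he₀i₀] at this
    exact one_ne_zero this.symm
  have h02 : (0 : Fin m → F) ≠ cc • e₀ := by
    intro h
    have := congrFun h i₀
    rw [Pi.smul_apply, he₀i₀, smul_eq_mul, mul_one] at this
    exact hc0 this.symm
  have h12 : e₀ ≠ cc • e₀ := by
    intro h
    have := congrFun h i₀
    rw [Pi.smul_apply, he₀i₀, smul_eq_mul, mul_one] at this
    exact hc1 this.symm
  have h01' : (0 : Fin m → F) ≠ e₁ := by
    intro h
    have := congrFun h i₁
    rw [he₁, Pi.single_eq_same] at this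
    exact one_ne_zero this.symm
  have h12' : e₀ ≠ e₁ := by
    intro h
    have := congrFun h i₀
    rw [he₀i₀, he₁i₀] at this
    exact one_ne_zero this
  refine ⟨{0, e₀, cc • e₀}, {0, e₀, e₁}, ?_, ?_, ?_⟩
  · exact Finset.card_eq_three.mpr ⟨0, e₀, cc • e₀, h01, h02, h12, rfl⟩
  · exact Finset.card_eq_three.mpr ⟨0, e₀, e₁, h01, h01', h12', rfl⟩
  · have hse1 := shell_eq (F := F) (m := m) (by omega) hq3 C hC wt hwt
      ((Fintype.card F - 1) * Fintype.card F ^ (m - 1)) rfl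
      ({0, e₀, cc • e₀} : Finset (Fin m → F))
    have hse2 := shell_eq (F := F) (m := m) (by omega) hq3 C hC wt hwt
      ((Fintype.card F - 1) * Fintype.card F ^ (m - 1)) rfl
      ({0, e₀, e₁} : Finset (Fin m → F))
    rw [hse1, hse2,
      Set.ncard_image_of_injective _ PhiF_inj, Set.ncard_image_of_injective _ PhiF_inj]
    have hT1 : {p : (Fin m → F) × F |
          p.1 ≠ 0 ∧ ∀ x ∈ ({0, e₀, cc • e₀} : Finset (Fin m → F)), PhiF p.1 p.2 x ≠ 0}
        = {p : (Fin m → F) × F |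
          p.1 ≠ 0 ∧ (p.2 ≠ 0 ∧ p.1 i₀ + p.2 ≠ 0 ∧ cc * p.1 i₀ + p.2 ≠ 0)} := by
      ext ⟨w, b⟩
      simp only [Set.mem_setOf_eq, Finset.mem_insert, Finset.mem_singleton, forall_eq_or_imp,
        forall_eq]
      have hA : PhiF w b 0 = b := by rw [PhiF, dotF_zero, zero_add]
      have hB : PhiF w b e₀ = w i₀ + b := by rw [PhiF, he₀, dotF_single, one_mul]
      have hD : PhiF w b (cc • e₀) = cc * w i₀ + b := by
        rw [PhiF, dotF_smul, he₀, dotF_single, one_mul]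
      rw [hA, hB, hD]
    have hT2 : {p : (Fin m → F) × F |
          p.1 ≠ 0 ∧ ∀ x ∈ ({0, e₀, e₁} : Finset (Fin m → F)), PhiF p.1 p.2 x ≠ 0}
        = {p : (Fin m → F) × F |
          p.1 ≠ 0 ∧ (p.2 ≠ 0 ∧ p.1 i₀ + p.2 ≠ 0 ∧ p.1 i₁ + p.2 ≠ 0)} := by
      ext ⟨w, b⟩
      simp only [Set.mem_setOf_eq, Finset.mem_insert, Finset.mem_singleton, forall_eq_or_imp,
        forall_eq]
      have hA : PhiF w b 0 = b := by rw [PhiF, dotF_zero, zero_add]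
      have hB : PhiF w b e₀ = w i₀ + b := by rw [PhiF, he₀, dotF_single, one_mul]
      have hD : PhiF w b e₁ = w i₁ + b := by rw [PhiF, he₁, dotF_single, one_mul]
      rw [hA, hB, hD]
    rw [hT1, hT2]
    have c1 := countT1 hm hc0 hc1 i₀
    have c2 := countT2 (F := F) hm i₀ i₁ hi
    have hx : ∀ n : ℕ, 3 ≤ n → (n - 1) * (n - 2) * n < (n - 1) * ((n - 1) * (n - 1)) := by
      intro n hn
      obtain ⟨a, rfl⟩ : ∃ a, n = a + 3 := ⟨n - 3, by omega⟩
      have e1 : a + 3 - 1 = a + 2 := by omega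
      have e2 : a + 3 - 2 = a + 1 := by omega
      rw [e1, e2]
      nlinarith [sq_nonneg a]
    have hKpos : 0 < Fintype.card F ^ (m - 2) := pow_pos (by omega) _
    have hlt : ((Fintype.card F - 1) * (Fintype.card F - 2)) * Fintype.card F ^ (m - 1)
        < ((Fintype.card F - 1) * ((Fintype.card F - 1) * (Fintype.card F - 1)))
          * Fintype.card F ^ (m - 2) := by
      have hstep : Fintype.card F ^ (m - 1) = Fintype.card F * Fintype.card F ^ (m - 2) := by
        rw [← pow_succ']; congr 1; omega
      rw [hstep]
      calc ((Fintype.card F - 1) * (Fintype.card F - 2))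
            * (Fintype.card F * Fintype.card F ^ (m - 2))
          = ((Fintype.card F - 1) * (Fintype.card F - 2) * Fintype.card F)
            * Fintype.card F ^ (m - 2) := by ring
        _ < ((Fintype.card F - 1) * ((Fintype.card F - 1) * (Fintype.card F - 1)))
            * Fintype.card F ^ (m - 2) :=
          (Nat.mul_lt_mul_right hKpos).mpr (hx _ hq3)
    intro h
    rw [h] at c1
    omega
end

section
/- Let q ≥ 3, m ≥ 2, ℓ = (q-1)q^{m-1}, and C = RM_q(1,m). For any 3-element subset T = {v, v+u₁, v+u₂} of V: if u₁, u₂ are linearly independent then the number of weight-ℓ codewords with support containing T equals (q-1)(q^m − 2q^{m-1} + q^{m-2} − 1), and if u₁, u₂ are linearly dependent then it equals (q-1)(q^m − 2q^{m-1} − 1). In particular C_ℓ is a 3-(q^m, ℓ, (λ₁, λ₂))-design with λ₁ = (q-1)(q^m − 2q^{m-1} + q^{m-2} − 1) and λ₂ = (q-1)(q^m − 2q^{m-1} − 1). -/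
open Finset

lemma aux_fiber_card {α β : Type*} [AddCommGroup α] [Fintype α] [AddCommGroup β] [Fintype β]
    (f : α →+ β) (hf : Function.Surjective f) (y : β) :
    Nat.card {x : α // f x = y} * Fintype.card β = Fintype.card α := by
  classical
  have e : ∀ z : β, {x : α // f x = z} ≃ {x : α // f x = y} := by
    intro z
    have hxz := (hf z).choose_spec
    have hxy := (hf y).choose_spec
    refine ⟨fun x => ⟨x.1 - (hf z).choose + (hf y).choose, ?_⟩,
      fun x => ⟨x.1 - (hf y).choose + (hf z).choose, ?_⟩, ?_, ?_⟩
    · simp [map_add, map_sub, x.2, hxz, hxy]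
    · simp [map_add, map_sub, x.2, hxz, hxy]
    · intro x; ext; simp
    · intro x; ext; simp
  have h1 : Fintype.card α = ∑ z : β, Fintype.card {x : α // f x = z} := by
    rw [← Fintype.card_sigma]
    exact (Fintype.card_congr (Equiv.sigmaFiberEquiv fun x => f x)).symm
  have h2 : ∀ z : β, Fintype.card {x : α // f x = z} = Nat.card {x : α // f x = y} := by
    intro z
    rw [← Nat.card_eq_fintype_card]
    exact Nat.card_congr (e z)
  rw [h1, Finset.sum_congr rfl fun z _ => h2 z, Finset.sum_const, card_univ, smul_eq_mul, mul_comm]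

lemma aux_sum_comp {α β : Type*} [Fintype α] [Fintype β] [DecidableEq β]
    (φ : α → β) (h : β → ℕ) (fib : ℕ)
    (hfib : ∀ y : β, Nat.card {x : α // φ x = y} = fib) :
    ∑ x : α, h (φ x) = fib * ∑ y : β, h y := by
  classical
  rw [← Finset.sum_fiberwise_of_maps_to' (t := Finset.univ) (fun x _ => Finset.mem_univ (φ x)) h]
  rw [Finset.mul_sum]
  refine Finset.sum_congr rfl fun y _ => ?_
  rw [Finset.sum_const, smul_eq_mul]
  congr 1
  rw [← hfib y, Nat.card_eq_fintype_card, Fintype.card_subtype]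

lemma aux_dot_surj_left {F : Type} [Field F] {n : ℕ} (c : Fin n → F) (hc : c ≠ 0) :
    Function.Surjective (fun x : Fin n → F => ∑ i, c i * x i) := by
  classical
  obtain ⟨i, hi⟩ : ∃ i, c i ≠ 0 := by
    by_contra h; push_neg at h; exact hc (funext h)
  intro a
  refine ⟨Pi.single i ((c i)⁻¹ * a), ?_⟩
  simp only [Pi.single_apply, mul_ite, mul_zero]
  rw [Finset.sum_ite_eq' Finset.univ i fun j => c j * ((c i)⁻¹ * a)]
  simp [← mul_assoc, mul_inv_cancel₀ hi]

lemma aux_dot_surj_right {F : Type} [Field F] {n : ℕ} (c : Fin n → F) (hc : c ≠ 0) :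
    Function.Surjective (fun x : Fin n → F => ∑ i, x i * c i) := by
  classical
  obtain ⟨i, hi⟩ : ∃ i, c i ≠ 0 := by
    by_contra h; push_neg at h; exact hc (funext h)
  intro a
  refine ⟨Pi.single i (a * (c i)⁻¹), ?_⟩
  simp only [Pi.single_apply, ite_mul, zero_mul]
  rw [Finset.sum_ite_eq' Finset.univ i fun j => a * (c i)⁻¹ * c j]
  simp [mul_assoc, inv_mul_cancel₀ hi]

def dotLin (F : Type) [Field F] (n : ℕ) (w : Fin n → F) : (Fin n → F) →ₗ[F] F where
  toFun x := ∑ i, w i * x i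
  map_add' x y := by simp [mul_add, Finset.sum_add_distrib]
  map_smul' a x := by simp [Finset.mul_sum, mul_left_comm]

lemma aux_bad_card {F : Type} [Field F] [DecidableEq F] (d a c : F) :
    ({-d, -(d + a), -(d + c)} : Finset F).card
      = if a = 0 ∧ c = 0 then 1 else if a = 0 ∨ c = 0 ∨ a = c then 2 else 3 := by
  have h1 : (-d = -(d + a)) ↔ a = 0 := by rw [neg_inj]; exact left_eq_add
  have h2 : (-d = -(d + c)) ↔ c = 0 := by rw [neg_inj]; exact left_eq_add
  have h3 : (-(d + a) = -(d + c)) ↔ a = c := by rw [neg_inj]; exact add_right_inj d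
  by_cases ha : a = 0
  · by_cases hc : c = 0
    · rw [if_pos ⟨ha, hc⟩]; subst ha hc; simp
    · rw [if_neg (by tauto), if_pos (by tauto)]
      subst ha
      rw [add_zero]
      rw [Finset.insert_idem]
      rw [Finset.card_insert_of_notMem (by simp [h2, hc]), Finset.card_singleton]
  · by_cases hc : c = 0
    · rw [if_neg (by tauto), if_pos (by tauto)]
      subst hc
      rw [add_zero]
      have : ({-d, -(d + a), -d} : Finset F) = {-d, -(d + a)} := by
        ext x; simp only [Finset.mem_insert, Finset.mem_singleton]; tauto
      rw [this, Finset.card_insert_of_notMem (by simp [h1, ha]), Finset.card_singleton]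
    · by_cases hac : a = c
      · rw [if_neg (by tauto), if_pos (by tauto)]
        subst hac
        have : ({-d, -(d + a), -(d + a)} : Finset F) = {-d, -(d + a)} := by
          congr 1
          exact Finset.insert_eq_self.mpr (Finset.mem_singleton_self _)
        rw [this, Finset.card_insert_of_notMem (by simp [h1, ha]), Finset.card_singleton]
      · rw [if_neg (by tauto), if_neg (by tauto)]
        rw [Finset.card_insert_of_notMem (by simp [h1, h2, ha, hc]),
          Finset.card_insert_of_notMem (by simp [h3, hac]), Finset.card_singleton]

/-- The shell of weight `(q-1)q^(m-1)` of `RM_q(1,m)` is a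
`3-(q^m, ℓ, (λ₁, λ₂))`-design: for a 3-subset `{v, v+u₁, v+u₂}`, the number of
weight-`ℓ` codewords whose support contains it is `λ₁` if `u₁, u₂` are linearly
independent and `λ₂` if they are linearly dependent. -/
theorem stmt_9 (F : Type) [Field F] [Fintype F] (q m : ℕ) (hq : q = Fintype.card F)
    (hq3 : 3 ≤ q) (hm : 2 ≤ m)
    (C : Set ((Fin m → F) → F))
    (hC : C = {c | ∃ (l : (Fin m → F) →ₗ[F] F) (b : F), c = fun x => l x + b})
    (wt : ((Fin m → F) → F) → ℕ)
    (hwt : ∀ c, wt c = {x | c x ≠ 0}.ncard)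
    (ℓ : ℕ) (hℓ : ℓ = (q - 1) * q ^ (m - 1))
    (v u₁ u₂ : Fin m → F) (hu₁ : u₁ ≠ 0) (hu₂ : u₂ ≠ 0) (hne : u₁ ≠ u₂)
    (T : Set (Fin m → F)) (hT : T = {v, v + u₁, v + u₂}) :
    (LinearIndependent F ![u₁, u₂] →
      {c ∈ C | wt c = ℓ ∧ ∀ x ∈ T, c x ≠ 0}.ncard
        = (q - 1) * (q ^ m - 2 * q ^ (m - 1) + q ^ (m - 2) - 1)) ∧
    (¬ LinearIndependent F ![u₁, u₂] →
      {c ∈ C | wt c = ℓ ∧ ∀ x ∈ T, c x ≠ 0}.ncard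
        = (q - 1) * (q ^ m - 2 * q ^ (m - 1) - 1)) := by
  classical
  have hq0 : 0 < q := by omega
  have hcF : Fintype.card F = q := hq.symm
  have hcV : Fintype.card (Fin m → F) = q ^ m := by simp [hcF]
  have hm1 : m - 1 + 1 = m := by omega
  have hm2 : m - 2 + 1 = m - 1 := by omega
  have hpow1 : q ^ (m - 1) * q = q ^ m := by
    conv_rhs => rw [← hm1]
    rw [pow_succ]
  have hpow2 : q ^ (m - 2) * q = q ^ (m - 1) := by
    conv_rhs => rw [← hm2]
    rw [pow_succ]
  have hXpos : 0 < q ^ (m - 1) := pow_pos hq0 _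
  have hℓqm : ℓ + q ^ (m - 1) = q ^ m := by
    rw [hℓ, ← hpow1]
    have hq1 : q - 1 + 1 = q := by omega
    calc (q - 1) * q ^ (m - 1) + q ^ (m - 1) = (q - 1 + 1) * q ^ (m - 1) := by ring
    _ = q ^ (m - 1) * q := by rw [hq1]; ring
  -- the parametrization
  set E : (Fin m → F) × F → ((Fin m → F) → F) :=
    fun p x => (∑ i, p.1 i * x i) + p.2 with hE
  have hEinj : Function.Injective E := by
    rintro ⟨w, b⟩ ⟨w', b'⟩ h
    have hb : b = b' := by
      have h0 := congrFun h 0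
      simpa [hE] using h0
    have hw : w = w' := by
      funext j
      have h1 := congrFun h (Pi.single j 1)
      simp only [hE, Pi.single_apply, mul_ite, mul_one, mul_zero,
        Finset.sum_ite_eq' Finset.univ j, Finset.mem_univ, if_true, hb] at h1
      exact add_right_cancel h1
    simp [hw, hb]
  -- weight of codewords with nonzero linear part
  have hwtE : ∀ (w : Fin m → F) (b : F), w ≠ 0 → wt (E (w, b)) = ℓ := by
    intro w b hw
    have hsurj : Function.Surjective (fun x : Fin m → F => ∑ i, w i * x i) :=
      aux_dot_surj_left w hw
    let f : (Fin m → F) →+ F := AddMonoidHom.mk' (fun x => ∑ i, w i * x i)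
      (by intro x y; simp [mul_add, Finset.sum_add_distrib])
    have hfib : Nat.card {x : Fin m → F // f x = -b} * q = q ^ m := by
      have h := aux_fiber_card f hsurj (-b)
      rwa [hcF, hcV] at h
    have hcard : Nat.card {x : Fin m → F // f x = -b} = q ^ (m - 1) :=
      Nat.eq_of_mul_eq_mul_right hq0 (by rw [hfib, hpow1])
    have hsetc : {x : Fin m → F | E (w, b) x ≠ 0} = {x : Fin m → F | f x = -b}ᶜ := by
      ext x
      simp only [hE, Set.mem_setOf_eq, Set.mem_compl_iff, f, AddMonoidHom.mk'_apply]
      constructor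
      · intro h h2
        exact h (by rw [h2]; ring)
      · intro h h2
        exact h (by linear_combination h2)
    have h1 : {x : Fin m → F | f x = -b}.ncard = q ^ (m - 1) := by
      rw [← Nat.card_coe_set_eq]
      exact hcard
    have h2 := Set.ncard_add_ncard_compl {x : Fin m → F | f x = -b}
    rw [h1, Nat.card_eq_fintype_card, hcV] at h2
    rw [hwt, hsetc]
    omega
  -- set equality with the image of the parameter set
  have hSeq : {c ∈ C | wt c = ℓ ∧ ∀ x ∈ T, c x ≠ 0}
      = E '' {p | p.1 ≠ 0 ∧ ∀ x ∈ T, E p x ≠ 0} := by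
    ext c
    constructor
    · rintro ⟨hcC, hwtc, hTc⟩
      rw [hC] at hcC
      obtain ⟨l, b, rfl⟩ := hcC
      set w : Fin m → F := fun i => l fun j => if i = j then 1 else 0 with hwdef
      have hce : (fun x => l x + b) = E (w, b) := by
        funext x
        have hpi := LinearMap.pi_apply_eq_sum_univ l x
        simp only [hE]
        rw [hpi]
        congr 1
        exact Finset.sum_congr rfl fun i _ => by rw [smul_eq_mul, mul_comm]
      have hvT : v ∈ T := by rw [hT]; exact Set.mem_insert _ _
      have hw : w ≠ 0 := by
        intro hw0
        have hcb : (fun x => l x + b) = fun _ => b := by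
          rw [hce, hw0]; funext x; simp [hE]
        have hb : b ≠ 0 := by
          have h := hTc v hvT
          rw [hcb] at h
          exact h
        have hwtb : wt (fun x => l x + b) = q ^ m := by
          rw [hcb, hwt]
          have : {x : Fin m → F | (fun _ => b) x ≠ 0} = Set.univ := by
            ext x; simp [hb]
          rw [this, Set.ncard_univ, Nat.card_eq_fintype_card, hcV]
        omega
      exact ⟨(w, b), ⟨hw, by rw [← hce]; exact hTc⟩, hce.symm⟩
    · rintro ⟨⟨w, b⟩, ⟨hw, hTp⟩, rfl⟩
      refine ⟨?_, hwtE w b hw, hTp⟩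
      rw [hC]
      exact ⟨dotLin F m w, b, rfl⟩
  -- counting the parameter set
  have hPcard : (E '' {p | p.1 ≠ 0 ∧ ∀ x ∈ T, E p x ≠ 0}).ncard
      = ∑ w : Fin m → F, Fintype.card {b : F // w ≠ 0 ∧ ∀ x ∈ T, E (w, b) x ≠ 0} := by
    rw [Set.ncard_image_of_injective _ hEinj]
    rw [← Nat.card_coe_set_eq, Nat.card_eq_fintype_card, ← Fintype.card_sigma]
    apply Fintype.card_congr
    exact ⟨fun p => ⟨p.1.1, p.1.2, p.2⟩, fun s => ⟨(s.1, s.2.1), s.2.2⟩,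
      fun p => rfl, fun s => rfl⟩
  -- per-w cardinalities
  have hWcard : ∀ w : Fin m → F, w ≠ 0 →
      Fintype.card {b : F // w ≠ 0 ∧ ∀ x ∈ T, E (w, b) x ≠ 0}
      = q - ({-(∑ i, w i * v i), -((∑ i, w i * v i) + ∑ i, w i * u₁ i),
          -((∑ i, w i * v i) + ∑ i, w i * u₂ i)} : Finset F).card := by
    intro w hw
    have hsplit₁ : ∑ i, w i * (v + u₁) i = (∑ i, w i * v i) + ∑ i, w i * u₁ i := by
      simp [Pi.add_apply, mul_add, Finset.sum_add_distrib]
    have hsplit₂ : ∑ i, w i * (v + u₂) i = (∑ i, w i * v i) + ∑ i, w i * u₂ i := by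
      simp [Pi.add_apply, mul_add, Finset.sum_add_distrib]
    have e1 : {b : F // w ≠ 0 ∧ ∀ x ∈ T, E (w, b) x ≠ 0}
        ≃ {b : F // b ∈ (({-(∑ i, w i * v i), -((∑ i, w i * v i) + ∑ i, w i * u₁ i),
          -((∑ i, w i * v i) + ∑ i, w i * u₂ i)} : Finset F)ᶜ)} := by
      apply Equiv.subtypeEquivRight
      intro b
      rw [hT]
      simp only [hE, Set.mem_insert_iff, Set.mem_singleton_iff, forall_eq_or_imp, forall_eq,
        Finset.mem_compl, Finset.mem_insert, Finset.mem_singleton, not_or, hw, ne_eq,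
        not_false_iff, true_and, hsplit₁, hsplit₂]
      constructor
      · rintro ⟨h1, h2, h3⟩
        refine ⟨fun hb => h1 ?_, fun hb => h2 ?_, fun hb => h3 ?_⟩ <;> (rw [hb]; ring)
      · rintro ⟨h1, h2, h3⟩
        refine ⟨fun hb => h1 ?_, fun hb => h2 ?_, fun hb => h3 ?_⟩ <;> linear_combination hb
    rw [Fintype.card_congr e1, Fintype.card_coe, Finset.card_compl, hcF]
  constructor
  · intro hli
    obtain ⟨Q, hQ⟩ : ∃ Q, q = Q + 3 := ⟨q - 3, by omega⟩
    subst hQ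
    -- surjectivity of the pair map
    have hsurj : Function.Surjective
        (fun w : Fin m → F => ((∑ i, w i * u₁ i, ∑ i, w i * u₂ i) : F × F)) := by
      have hr : LinearIndepOn F id (Set.range ![u₁, u₂]) :=
        (linearIndepOn_id_range_iff hli.injective).mpr hli
      have hu₁s : u₁ ∈ Set.range ![u₁, u₂] := ⟨0, rfl⟩
      have hu₂s : u₂ ∈ Set.range ![u₁, u₂] := ⟨1, rfl⟩
      have h₁t : u₁ ∈ hr.extend (Set.subset_univ _) := hr.subset_extend _ hu₁s
      have h₂t : u₂ ∈ hr.extend (Set.subset_univ _) := hr.subset_extend _ hu₂s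
      set B := Module.Basis.extend hr with hB
      rintro ⟨a, b⟩
      set l : (Fin m → F) →ₗ[F] F := a • B.coord ⟨u₁, h₁t⟩ + b • B.coord ⟨u₂, h₂t⟩ with hl
      refine ⟨fun i => l fun j => if i = j then 1 else 0, ?_⟩
      have hlx : ∀ x : Fin m → F,
          ∑ i, (l fun j => if i = j then 1 else 0) * x i = l x := by
        intro x
        rw [LinearMap.pi_apply_eq_sum_univ l x]
        exact Finset.sum_congr rfl fun i _ => by rw [smul_eq_mul, mul_comm]
      have hBu₁ : B ⟨u₁, h₁t⟩ = u₁ := Module.Basis.extend_apply_self hr ⟨u₁, h₁t⟩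
      have hBu₂ : B ⟨u₂, h₂t⟩ = u₂ := Module.Basis.extend_apply_self hr ⟨u₂, h₂t⟩
      have hnesub : (⟨u₁, h₁t⟩ : hr.extend (Set.subset_univ _)) ≠ ⟨u₂, h₂t⟩ := by
        intro h
        exact hne (congrArg Subtype.val h)
      have hrep1 := B.repr_self ⟨u₁, h₁t⟩
      rw [hBu₁] at hrep1
      have hrep2 := B.repr_self ⟨u₂, h₂t⟩
      rw [hBu₂] at hrep2
      have e1 : l u₁ = a := by
        rw [hl]
        simp [Module.Basis.coord_apply, hrep1, Finsupp.single_apply, hnesub, Ne.symm hnesub]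
      have e2 : l u₂ = b := by
        rw [hl]
        simp [Module.Basis.coord_apply, hrep2, Finsupp.single_apply, hnesub, Ne.symm hnesub]
      simp only [Prod.mk.injEq]
      exact ⟨by rw [hlx u₁, e1], by rw [hlx u₂, e2]⟩
    set φ : (Fin m → F) → F × F := fun w => (∑ i, w i * u₁ i, ∑ i, w i * u₂ i) with hφ
    have hφadd : ∀ x y : Fin m → F, φ (x + y) = φ x + φ y := by
      intro x y
      simp [hφ, Prod.ext_iff, add_mul, Finset.sum_add_distrib]
    have hfib : ∀ y : F × F, Nat.card {x : Fin m → F // φ x = y} = (Q + 3) ^ (m - 2) := by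
      intro y
      have h := aux_fiber_card (AddMonoidHom.mk' φ hφadd) hsurj y
      rw [hcV] at h
      have hcF2 : Fintype.card (F × F) = (Q + 3) * (Q + 3) := by simp [hcF]
      rw [hcF2] at h
      have h2 : (Q + 3) ^ (m - 2) * ((Q + 3) * (Q + 3)) = (Q + 3) ^ m := by
        rw [← hpow1, ← hpow2]; ring
      exact Nat.eq_of_mul_eq_mul_right (show 0 < (Q + 3) * (Q + 3) by positivity)
        (h.trans h2.symm)
    set G : F × F → ℕ :=
      fun y => if y.1 = 0 ∧ y.2 = 0 then 1 else if y.1 = 0 ∨ y.2 = 0 ∨ y.1 = y.2 then 2 else 3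
      with hG
    have hterm : ∀ w : Fin m → F,
        Fintype.card {b : F // w ≠ 0 ∧ ∀ x ∈ T, E (w, b) x ≠ 0}
          = if w = 0 then 0 else (Q + 3) - G (φ w) := by
      intro w
      by_cases hw : w = 0
      · rw [if_pos hw]
        exact Fintype.card_eq_zero_iff.mpr ⟨fun b => b.2.1 hw⟩
      · rw [if_neg hw, hWcard w hw, aux_bad_card]
    have hsum0 : ∑ w : Fin m → F, Fintype.card {b : F // w ≠ 0 ∧ ∀ x ∈ T, E (w, b) x ≠ 0}
        = ∑ w : Fin m → F, (if w = 0 then 0 else (Q + 3) - G (φ w)) :=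
      Finset.sum_congr rfl fun w _ => hterm w
    have hG0 : G (φ 0) = 1 := by simp [hφ, hG]
    have hsum1 : (∑ w : Fin m → F, (if w = 0 then 0 else (Q + 3) - G (φ w))) + (Q + 2)
        = ∑ w : Fin m → F, ((Q + 3) - G (φ w)) := by
      rw [← Finset.add_sum_erase Finset.univ (fun w : Fin m → F => if w = 0 then 0 else (Q + 3) - G (φ w)) (Finset.mem_univ (0 : Fin m → F)),
        ← Finset.add_sum_erase Finset.univ (fun w : Fin m → F => (Q + 3) - G (φ w)) (Finset.mem_univ (0 : Fin m → F))]
      have heq : ∑ w ∈ Finset.univ.erase (0 : Fin m → F), (if w = 0 then 0 else (Q + 3) - G (φ w))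
          = ∑ w ∈ Finset.univ.erase (0 : Fin m → F), ((Q + 3) - G (φ w)) :=
        Finset.sum_congr rfl fun w hwin => if_neg (Finset.mem_erase.mp hwin).1
      rw [heq, if_pos rfl, hG0]
      omega
    have hsum2 : ∑ w : Fin m → F, ((Q + 3) - G (φ w))
        = (Q + 3) ^ (m - 2) * ∑ y : F × F, ((Q + 3) - G y) :=
      aux_sum_comp φ (fun y => (Q + 3) - G y) _ hfib
    have hGsum : ∑ y : F × F, ((Q + 3) - G y)
        = ((Q + 2) + (Q + 2) * (Q + 1)) + (Q + 2) * ((Q + 1) + ((Q + 1) + (Q + 1) * Q)) := by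
      rw [Fintype.sum_prod_type]
      rw [← Finset.add_sum_erase Finset.univ (fun a : F => ∑ b : F, ((Q + 3) - G (a, b)))
        (Finset.mem_univ (0 : F))]
      congr 1
      · -- a = 0 column
        rw [← Finset.add_sum_erase Finset.univ (fun b : F => (Q + 3) - G ((0 : F), b))
          (Finset.mem_univ (0 : F))]
        have h00 : (Q + 3) - G ((0 : F), (0 : F)) = Q + 2 := by
          simp only [hG]
          norm_num
        have hrest : ∑ b ∈ Finset.univ.erase (0 : F), ((Q + 3) - G ((0 : F), b))
            = (Q + 2) * (Q + 1) := by
          have : ∀ b ∈ Finset.univ.erase (0 : F), (Q + 3) - G ((0 : F), b) = Q + 1 := by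
            intro b hb
            have hbne := (Finset.mem_erase.mp hb).1
            simp only [hG]
            rw [if_neg (by simp [hbne]), if_pos (by left; trivial)]
            omega
          rw [Finset.sum_congr rfl this, Finset.sum_const, smul_eq_mul,
            Finset.card_erase_of_mem (Finset.mem_univ _), Finset.card_univ, hcF]
          congr 1
        rw [hrest, h00]
      · -- a ≠ 0 columns
        have hcol : ∀ a : F, a ∈ Finset.univ.erase (0 : F) →
            ∑ b : F, ((Q + 3) - G (a, b)) = (Q + 1) + ((Q + 1) + (Q + 1) * Q) := by
          intro a ha
          have ha0 := (Finset.mem_erase.mp ha).1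
          rw [← Finset.add_sum_erase Finset.univ (fun b : F => (Q + 3) - G (a, b))
            (Finset.mem_univ (0 : F))]
          have hA0 : (Q + 3) - G (a, (0 : F)) = Q + 1 := by
            simp only [hG]
            rw [if_neg (by simp [ha0]), if_pos (by right; left; trivial)]
            omega
          rw [hA0]
          congr 1
          rw [← Finset.add_sum_erase _ (fun b : F => (Q + 3) - G (a, b))
            (Finset.mem_erase.mpr ⟨ha0, Finset.mem_univ a⟩)]
          have hAa : (Q + 3) - G (a, a) = Q + 1 := by
            simp only [hG]
            rw [if_neg (by simp [ha0]), if_pos (by right; right; trivial)]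
            omega
          rw [hAa]
          congr 1
          have : ∀ b ∈ (Finset.univ.erase (0 : F)).erase a, (Q + 3) - G (a, b) = Q := by
            intro b hb
            obtain ⟨hba, hb0'⟩ := Finset.mem_erase.mp hb
            have hb0 := (Finset.mem_erase.mp hb0').1
            simp only [hG]
            rw [if_neg (by simp [ha0]), if_neg (by push_neg; exact ⟨ha0, hb0, fun h => hba h.symm⟩)]
            omega
          rw [Finset.sum_congr rfl this, Finset.sum_const, smul_eq_mul]
          have hcard2 : ((Finset.univ.erase (0 : F)).erase a).card = Q + 1 := by
            rw [Finset.card_erase_of_mem (Finset.mem_erase.mpr ⟨ha0, Finset.mem_univ a⟩),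
              Finset.card_erase_of_mem (Finset.mem_univ _), Finset.card_univ, hcF]
            omega
          rw [hcard2]
        rw [Finset.sum_congr rfl hcol, Finset.sum_const, smul_eq_mul,
          Finset.card_erase_of_mem (Finset.mem_univ _), Finset.card_univ, hcF]
        congr 1
    -- final arithmetic
    rw [hSeq, hPcard, hsum0]
    have hq1 : Q + 3 - 1 = Q + 2 := by omega
    have hsub1 : (Q + 3) ^ m - 2 * (Q + 3) ^ (m - 1)
        = (Q + 3) ^ (m - 2) * (Q * Q + 4 * Q + 3) :=
      Nat.sub_eq_of_eq_add (by rw [← hpow1, ← hpow2]; ring)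
    have hc1 : (Q + 3) ^ m - 2 * (Q + 3) ^ (m - 1) + (Q + 3) ^ (m - 2)
        = (Q + 3) ^ (m - 2) * ((Q + 2) * (Q + 2)) := by
      rw [hsub1]; ring
    rw [hq1, hc1]
    have hZpos : 0 < (Q + 3) ^ (m - 2) := pow_pos (by omega) _
    have hWpos : 0 < (Q + 3) ^ (m - 2) * ((Q + 2) * (Q + 2)) := by positivity
    have hfin : (Q + 2) * ((Q + 3) ^ (m - 2) * ((Q + 2) * (Q + 2)) - 1) + (Q + 2)
        = (Q + 2) * ((Q + 3) ^ (m - 2) * ((Q + 2) * (Q + 2))) := by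
      rw [← Nat.mul_succ]
      congr 1
      exact Nat.succ_pred_eq_of_pos hWpos
    have hfinal : (∑ w : Fin m → F, (if w = 0 then 0 else (Q + 3) - G (φ w))) + (Q + 2)
        = (Q + 2) * ((Q + 3) ^ (m - 2) * ((Q + 2) * (Q + 2)) - 1) + (Q + 2) := by
      rw [hfin, hsum1, hsum2, hGsum]
      ring
    exact Nat.add_right_cancel hfinal
  · intro hdep
    obtain ⟨Q, hQ⟩ : ∃ Q, q = Q + 3 := ⟨q - 3, by omega⟩
    subst hQ
    rw [LinearIndependent.pair_iff] at hdep
    push_neg at hdep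
    obtain ⟨s, t, hst, hns⟩ := hdep
    have ht : t ≠ 0 := by
      intro ht0
      subst ht0
      simp only [zero_smul, add_zero] at hst
      rcases smul_eq_zero.mp hst with hs | h1
      · exact hns hs rfl
      · exact hu₁ h1
    have hu2 : u₂ = (t⁻¹ * (-s)) • u₁ := by
      rw [mul_smul, eq_inv_smul_iff₀ ht, neg_smul]
      exact eq_neg_of_add_eq_zero_right hst
    set aa := t⁻¹ * (-s) with haa
    have ha0 : aa ≠ 0 := by
      intro h
      exact hu₂ (by rw [hu2, h, zero_smul])
    have ha1 : aa ≠ 1 := by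
      intro h
      exact hne (by rw [hu2, h, one_smul])
    have hs21 : ∀ w : Fin m → F, ∑ i, w i * u₂ i = aa * ∑ i, w i * u₁ i := by
      intro w
      rw [Finset.mul_sum]
      refine Finset.sum_congr rfl fun i _ => ?_
      rw [hu2]
      simp only [Pi.smul_apply, smul_eq_mul]
      ring
    set φ : (Fin m → F) → F := fun w => ∑ i, w i * u₁ i with hφ
    have hφadd : ∀ x y : Fin m → F, φ (x + y) = φ x + φ y := by
      intro x y
      simp [hφ, add_mul, Finset.sum_add_distrib]
    have hsurj : Function.Surjective φ := aux_dot_surj_right u₁ hu₁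
    have hfib : ∀ y : F, Nat.card {x : Fin m → F // φ x = y} = (Q + 3) ^ (m - 1) := by
      intro y
      have h := aux_fiber_card (AddMonoidHom.mk' φ hφadd) hsurj y
      rw [hcV, hcF] at h
      exact Nat.eq_of_mul_eq_mul_right (show 0 < Q + 3 by omega) (h.trans hpow1.symm)
    set G : F → ℕ := fun y => if y = 0 then 1 else 3 with hG
    have hterm : ∀ w : Fin m → F,
        Fintype.card {b : F // w ≠ 0 ∧ ∀ x ∈ T, E (w, b) x ≠ 0}
          = if w = 0 then 0 else (Q + 3) - G (φ w) := by
      intro w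
      by_cases hw : w = 0
      · rw [if_pos hw]
        exact Fintype.card_eq_zero_iff.mpr ⟨fun b => b.2.1 hw⟩
      · rw [if_neg hw, hWcard w hw, aux_bad_card, hs21 w]
        congr 1
        by_cases hb : (∑ i, w i * u₁ i) = 0
        · simp [hG, hφ, hb]
        · have hsa : (∑ i, w i * u₁ i) ≠ aa * ∑ i, w i * u₁ i := by
            intro h
            exact ha1 (mul_right_cancel₀ hb (by rw [← h, one_mul]))
          simp [hG, hφ, hb, mul_ne_zero ha0 hb, hsa]
    have hsum0 : ∑ w : Fin m → F, Fintype.card {b : F // w ≠ 0 ∧ ∀ x ∈ T, E (w, b) x ≠ 0}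
        = ∑ w : Fin m → F, (if w = 0 then 0 else (Q + 3) - G (φ w)) :=
      Finset.sum_congr rfl fun w _ => hterm w
    have hG0 : G (φ 0) = 1 := by simp [hφ, hG]
    have hsum1 : (∑ w : Fin m → F, (if w = 0 then 0 else (Q + 3) - G (φ w))) + (Q + 2)
        = ∑ w : Fin m → F, ((Q + 3) - G (φ w)) := by
      rw [← Finset.add_sum_erase Finset.univ (fun w : Fin m → F => if w = 0 then 0 else (Q + 3) - G (φ w)) (Finset.mem_univ (0 : Fin m → F)),
        ← Finset.add_sum_erase Finset.univ (fun w : Fin m → F => (Q + 3) - G (φ w)) (Finset.mem_univ (0 : Fin m → F))]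
      have heq : ∑ w ∈ Finset.univ.erase (0 : Fin m → F), (if w = 0 then 0 else (Q + 3) - G (φ w))
          = ∑ w ∈ Finset.univ.erase (0 : Fin m → F), ((Q + 3) - G (φ w)) :=
        Finset.sum_congr rfl fun w hwin => if_neg (Finset.mem_erase.mp hwin).1
      rw [heq, if_pos rfl, hG0]
      omega
    have hsum2 : ∑ w : Fin m → F, ((Q + 3) - G (φ w))
        = (Q + 3) ^ (m - 1) * ∑ y : F, ((Q + 3) - G y) :=
      aux_sum_comp φ (fun y => (Q + 3) - G y) _ hfib
    have hGsum : ∑ y : F, ((Q + 3) - G y) = (Q + 2) + (Q + 2) * Q := by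
      rw [← Finset.add_sum_erase Finset.univ (fun y : F => (Q + 3) - G y)
        (Finset.mem_univ (0 : F))]
      have h0 : (Q + 3) - G (0 : F) = Q + 2 := by
        simp only [hG, if_pos rfl]
        omega
      have hrest : ∑ b ∈ Finset.univ.erase (0 : F), ((Q + 3) - G b) = (Q + 2) * Q := by
        have hcg : ∀ b ∈ Finset.univ.erase (0 : F), (Q + 3) - G b = Q := by
          intro b hb
          have h1 := (Finset.mem_erase.mp hb).1
          simp only [hG, if_neg h1]
          omega
        rw [Finset.sum_congr rfl hcg, Finset.sum_const, smul_eq_mul,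
          Finset.card_erase_of_mem (Finset.mem_univ _), Finset.card_univ, hcF]
        congr 1
      rw [h0, hrest]
    rw [hSeq, hPcard, hsum0]
    have hq1 : Q + 3 - 1 = Q + 2 := by omega
    have hsub1 : (Q + 3) ^ m - 2 * (Q + 3) ^ (m - 1) = (Q + 3) ^ (m - 1) * (Q + 1) :=
      Nat.sub_eq_of_eq_add (by rw [← hpow1]; ring)
    rw [hq1, hsub1]
    have hWpos : 0 < (Q + 3) ^ (m - 1) * (Q + 1) := by positivity
    have hfin : (Q + 2) * ((Q + 3) ^ (m - 1) * (Q + 1) - 1) + (Q + 2)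
        = (Q + 2) * ((Q + 3) ^ (m - 1) * (Q + 1)) := by
      rw [← Nat.mul_succ]
      congr 1
      exact Nat.succ_pred_eq_of_pos hWpos
    have hfinal : (∑ w : Fin m → F, (if w = 0 then 0 else (Q + 3) - G (φ w))) + (Q + 2)
        = (Q + 2) * ((Q + 3) ^ (m - 1) * (Q + 1) - 1) + (Q + 2) := by
      rw [hfin, hsum1, hsum2, hGsum]
      ring
    exact Nat.add_right_cancel hfinal
end

section
/- Let u₁, u₂, u₃ ∈ V be distinct nonzero vectors spanning a 1-dimensional subspace, and T = {0, u₁, u₂, u₃}. Then the numbers a_i of non-constant codewords of RM_q(1,m) with exactly i nonzero values on T are: a₀ = q^{m-1} − 1, a₁ = 0, a₂ = 0, a₃ = 4(q−1)q^{m-1}, a₄ = (q−1)(q^m − 3q^{m-1} − 1). -/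
/-!
A non-constant affine function `c = l + b` takes the values `t * l u + b` on `T = {t • u | t ∈ S}`
(here `S = {0, 1, t₂, t₃}`), so its weight on `T` depends only on the pair `(l u, b)`. Since
`l ↦ l u` is a surjective linear form on the dual, each pair `(s, b)` comes from exactly
`q ^ (m - 1)` functions `l + b`, one of which is constant when `s = 0`. For `s = 0` the weight is
`0` or `|S|`; for `s ≠ 0` write `b = -(r * s)`, and the weight is `|S \ {r}|`, that is `|S| - 1`
for the `|S|` values `r ∈ S` and `|S|` for the others.
-/

open Finset Module

theorem AddMonoidHom.card_filter_comp_of_surjective {G M : Type*} [AddGroup G] [Fintype G]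
    [AddMonoid M] [Fintype M] [DecidableEq M] (f : G →+ M) (hf : Function.Surjective f)
    (P : M → Prop) [DecidablePred P] :
    #{g | P (f g)} = #{y | P y} * #{g | f g = 0} := by
  rw [card_eq_sum_card_fiberwise (f := f) (t := {y | P y}) (fun g hg => by simpa using hg),
    ← smul_eq_mul, ← sum_const]
  refine sum_congr rfl fun y hy => ?_
  rw [filter_filter, ← AddMonoidHom.card_fiber_eq_of_mem_range f (hf y) (hf 0)]
  congr 1
  ext g
  simp only [mem_filter, mem_univ, true_and, and_iff_right_iff_imp]
  rintro rfl
  simpa using hy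

theorem Finset.card_filter_card_erase {α : Type*} [Fintype α] [DecidableEq α] (S : Finset α)
    (n : ℕ) :
    #{r | #(S.erase r) = n} =
      (if n + 1 = #S then #S else 0) + (if n = #S then Fintype.card α - #S else 0) := by
  simp only [card_erase_eq_ite]
  rcases eq_or_ne (n + 1) #S with h1 | h1
  · rw [if_pos h1, if_neg (by omega), add_zero]
    congr 1
    ext r
    by_cases hr : r ∈ S <;> simp [hr] <;> omega
  rcases eq_or_ne n #S with rfl | hn
  · rw [if_neg h1, if_pos rfl, zero_add, ← card_compl]
    congr 1
    ext r
    by_cases hr : r ∈ S <;> simp [hr]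
    have := card_pos.mpr ⟨r, hr⟩
    omega
  · rw [if_neg h1, if_neg hn, card_eq_zero, filter_eq_empty_iff]
    intro r _
    split_ifs with hr
    · have := card_pos.mpr ⟨r, hr⟩
      omega
    · exact hn.symm

section evalPair

variable {F V : Type*} [Field F] [AddCommGroup V] [Module F V]

def evalPair (u : V) : Dual F V × F →ₗ[F] F × F := (Dual.eval F V u).prodMap LinearMap.id

theorem evalPair_surjective {u : V} (hu : u ≠ 0) : Function.Surjective (evalPair (F := F) u) := by
  obtain ⟨l, hl⟩ : ∃ l : Dual F V, l u ≠ 0 := by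
    by_contra! h
    exact hu ((forall_dual_apply_eq_zero_iff F u).mp h)
  rintro ⟨s, b⟩
  exact ⟨((s / l u) • l, b), by simp [evalPair, hl]⟩

variable [Fintype F] [DecidableEq F] [Module.Finite F V] [Fintype (Dual F V)]

theorem card_evalPair_eq_zero {u : V} (hu : u ≠ 0) :
    #{p | evalPair (F := F) u p = 0} = Fintype.card F ^ (finrank F V - 1) := by
  -- with `P = True` the fibre count reads `|Dual F V × F| = q² · |ker|`
  have h := (evalPair (F := F) u).toAddMonoidHom.card_filter_comp_of_surjective
    (evalPair_surjective hu) fun _ => True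
  simp only [filter_true, card_univ, Fintype.card_prod] at h
  rw [Module.card_eq_pow_finrank (K := F) (V := Dual F V), Subspace.dual_finrank_eq] at h
  obtain ⟨d, hd⟩ : ∃ d, finrank F V = d + 1 :=
    Nat.exists_eq_succ_of_ne_zero (Module.finrank_pos_iff_exists_ne_zero.mpr ⟨u, hu⟩).ne'
  rw [hd] at h ⊢
  rw [Nat.add_sub_cancel]
  have hq : 0 < Fintype.card F := Fintype.card_pos
  exact Nat.eq_of_mul_eq_mul_left (Nat.mul_pos hq hq) (h.symm.trans (by ring))

theorem card_filter_apply_prod {u : V} (hu : u ≠ 0) (P : F × F → Prop) [DecidablePred P] :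
    #{p : Dual F V × F | P (p.1 u, p.2)} = #{y | P y} * Fintype.card F ^ (finrank F V - 1) :=
  ((evalPair u).toAddMonoidHom.card_filter_comp_of_surjective (evalPair_surjective hu) P).trans
    (congrArg _ (card_evalPair_eq_zero hu))

end evalPair

section affine

variable {F V : Type*} [Field F] [AddCommGroup V] [Module F V]

theorem linear_add_const_injective :
    Function.Injective fun p : Dual F V × F => fun x => p.1 x + p.2 := by
  rintro ⟨l, b⟩ ⟨l', b'⟩ h
  obtain rfl : b = b' := by simpa using congrFun h 0
  exact Prod.ext (LinearMap.ext fun x => add_right_cancel (congrFun h x)) rfl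

theorem ncard_sep_nonconstant_affine [Fintype F] [Fintype (Dual F V)] [DecidableEq (Dual F V)]
    (P : (V → F) → Prop) [DecidablePred P] :
    {c ∈ {c : V → F | ∃ l : V →ₗ[F] F, l ≠ 0 ∧ ∃ b, c = fun x => l x + b} | P c}.ncard =
      #{p : Dual F V × F | p.1 ≠ 0 ∧ P fun x => p.1 x + p.2} := by
  rw [← Set.ncard_coe_finset, ← Set.ncard_image_of_injective _ linear_add_const_injective]
  congr 1
  ext c
  simp only [Set.mem_ofPred_eq, coe_filter, mem_univ, true_and, Set.mem_image, Prod.exists]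
  constructor
  · rintro ⟨⟨l, hl, b, rfl⟩, hc⟩
    exact ⟨l, b, ⟨hl, hc⟩, rfl⟩
  · rintro ⟨l, b, ⟨hl, hc⟩, rfl⟩
    exact ⟨⟨l, hl, b, rfl⟩, hc⟩

end affine

section lineWeight

variable {F : Type*} [Field F] [DecidableEq F]

/-- The weight on `{t • u | t ∈ S}` of an affine function `l + b` with `l u = s`. -/
def lineWeight (S : Finset F) (s b : F) : ℕ := #{t ∈ S | t * s + b ≠ 0}

theorem ncard_sep_image_smul_eq_lineWeight {V : Type*} [AddCommGroup V] [Module F V] {u : V}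
    (hu : u ≠ 0) (S : Finset F) (l : V →ₗ[F] F) (b : F) :
    {x ∈ (· • u) '' (S : Set F) | l x + b ≠ 0}.ncard = lineWeight S (l u) b := by
  have : {x ∈ (· • u) '' (S : Set F) | l x + b ≠ 0} =
      (· • u) '' (({t ∈ S | t * l u + b ≠ 0} : Finset F) : Set F) := by
    ext x
    simp only [Set.mem_ofPred_eq, Set.mem_image, coe_filter]
    constructor
    · rintro ⟨⟨t, ht, rfl⟩, hx⟩
      exact ⟨t, ⟨ht, by simpa using hx⟩, rfl⟩
    · rintro ⟨t, ⟨ht, hx⟩, rfl⟩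
      exact ⟨⟨t, ht, rfl⟩, by simpa using hx⟩
  rw [this, Set.ncard_image_of_injective _ (smul_left_injective F hu), Set.ncard_coe_finset,
    lineWeight]

theorem lineWeight_zero_left (S : Finset F) (b : F) :
    lineWeight S 0 b = if b = 0 then 0 else #S := by
  unfold lineWeight
  split_ifs with hb <;> simp [hb]

theorem lineWeight_neg_mul (S : Finset F) {s : F} (hs : s ≠ 0) (r : F) :
    lineWeight S s (-(r * s)) = #(S.erase r) := by
  rw [lineWeight, ← filter_ne']
  congr 1
  ext t
  simp [← sub_eq_add_neg, ← sub_mul, hs, sub_eq_zero]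

variable [Fintype F]

theorem card_filter_lineWeight (S : Finset F) (n : ℕ) :
    #{p : F × F | lineWeight S p.1 p.2 = n} =
      #{b | lineWeight S 0 b = n} + (Fintype.card F - 1) * #{r | #(S.erase r) = n} := by
  rw [card_filter, Fintype.sum_prod_type, ← add_sum_erase _ _ (mem_univ 0)]
  simp only [← card_filter]
  rw [← card_univ, ← card_erase_of_mem (mem_univ 0), ← smul_eq_mul, ← sum_const]
  refine congrArg _ (sum_congr rfl fun s hs => ?_)
  have hs : s ≠ 0 := ne_of_mem_erase hs
  refine card_nbij' (fun b => -b / s) (fun r => -(r * s)) ?_ ?_ ?_ ?_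
  · intro b hb
    simp only [coe_filter, mem_univ, true_and, Set.mem_ofPred_eq] at hb ⊢
    rw [← lineWeight_neg_mul S hs, neg_div, neg_mul, neg_neg, div_mul_cancel₀ _ hs, hb]
  · intro r hr
    simp only [coe_filter, mem_univ, true_and, Set.mem_ofPred_eq] at hr ⊢
    rwa [lineWeight_neg_mul S hs]
  · intro b _
    simp [div_mul_cancel₀ _ hs]
  · intro r _
    simp [hs]

theorem card_filter_lineWeight_zero_left {S : Finset F} (hS : S.Nonempty) (n : ℕ) :
    #{b | lineWeight S 0 b = n} =
      (if n = 0 then 1 else 0) + (if n = #S then Fintype.card F - 1 else 0) := by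
  have hS0 : #S ≠ 0 := hS.card_pos.ne'
  simp only [lineWeight_zero_left]
  rcases eq_or_ne n 0 with rfl | h0
  · rw [if_pos rfl, if_neg hS0.symm, add_zero]
    convert card_singleton (0 : F)
    ext b
    by_cases hb : b = 0 <;> simp [hb, hS.ne_empty]
  rcases eq_or_ne n #S with rfl | hn
  · rw [if_neg h0, if_pos rfl, zero_add, ← card_univ, ← card_erase_of_mem (mem_univ (0 : F))]
    congr 1
    ext b
    by_cases hb : b = 0 <;> simp [hb, h0.symm]
  · rw [if_neg h0, if_neg hn, card_eq_zero, filter_eq_empty_iff]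
    intro b _
    split_ifs <;> omega

end lineWeight

theorem ncard_nonconstant_affine_lineWeight_add {F V : Type*} [Field F] [Fintype F]
    [DecidableEq F] [AddCommGroup V] [Module F V] [Module.Finite F V] {u : V} (hu : u ≠ 0)
    (S : Finset F) (n : ℕ) :
    {c ∈ {c : V → F | ∃ l : V →ₗ[F] F, l ≠ 0 ∧ ∃ b, c = fun x => l x + b} |
        {x ∈ (· • u) '' (S : Set F) | c x ≠ 0}.ncard = n}.ncard + #{b | lineWeight S 0 b = n} =
      #{p : F × F | lineWeight S p.1 p.2 = n} * Fintype.card F ^ (finrank F V - 1) := by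
  classical
  have : Finite (Dual F V) := Module.finite_of_finite F
  let _ := Fintype.ofFinite (Dual F V)
  rw [ncard_sep_nonconstant_affine, ← card_filter_apply_prod hu fun y => lineWeight S y.1 y.2 = n,
    ← card_filter_add_card_filter_not (s := {p : Dual F V × F | lineWeight S (p.1 u) p.2 = n})
      fun p => p.1 ≠ 0, filter_filter, filter_filter]
  simp only [ncard_sep_image_smul_eq_lineWeight hu]
  congr 1
  · exact congrArg card (filter_congr fun _ _ => and_comm)
  · refine card_nbij' (fun b => (0, b)) Prod.snd ?_ ?_ ?_ ?_
    · intro b hb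
      simpa using hb
    · rintro ⟨l, b⟩ hp
      simp only [coe_filter, Set.mem_ofPred_eq, mem_univ, true_and, not_not] at hp ⊢
      rw [hp.2, LinearMap.zero_apply] at hp
      exact hp.1
    · intro b _
      rfl
    · rintro ⟨l, b⟩ hp
      simp only [coe_filter, Set.mem_ofPred_eq, mem_univ, true_and, not_not] at hp
      simp [hp.2]

/-- Counts of non-constant codewords of `RM_q(1,m)` by number of nonzero values on
`T = {0, u₁, u₂, u₃}` with `u₁, u₂, u₃` distinct nonzero vectors spanning a line. -/
theorem stmt_13 (F : Type) [Field F] [Fintype F] (q m : ℕ) (hq : q = Fintype.card F)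
    (hq4 : 4 ≤ q) (hm : 1 ≤ m) (u₁ u₂ u₃ : Fin m → F)
    (hu₁ : u₁ ≠ 0) (hu₂ : u₂ ≠ 0) (hu₃ : u₃ ≠ 0)
    (h12 : u₁ ≠ u₂) (h13 : u₁ ≠ u₃) (h23 : u₂ ≠ u₃)
    (t₂ t₃ : F) (ht₂ : u₂ = t₂ • u₁) (ht₃ : u₃ = t₃ • u₁)
    (T : Set (Fin m → F)) (hT : T = {0, u₁, u₂, u₃})
    (NC : Set ((Fin m → F) → F))
    (hNC : NC = {c | ∃ (l : (Fin m → F) →ₗ[F] F), l ≠ 0 ∧ ∃ b : F, c = fun x => l x + b}) :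
    {c ∈ NC | {x ∈ T | c x ≠ 0}.ncard = 0}.ncard = q ^ (m - 1) - 1 ∧
    {c ∈ NC | {x ∈ T | c x ≠ 0}.ncard = 1}.ncard = 0 ∧
    {c ∈ NC | {x ∈ T | c x ≠ 0}.ncard = 2}.ncard = 0 ∧
    {c ∈ NC | {x ∈ T | c x ≠ 0}.ncard = 3}.ncard = 4 * (q - 1) * q ^ (m - 1) ∧
    {c ∈ NC | {x ∈ T | c x ≠ 0}.ncard = 4}.ncard
      = (q - 1) * (q ^ m - 3 * q ^ (m - 1) - 1) := by
  classical
  subst hNC hT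
  set S : Finset F := {0, 1, t₂, t₃}
  have hTS : ({0, u₁, u₂, u₃} : Finset (Fin m → F)) = S.image (· • u₁) := by
    simp [S, ht₂, ht₃]
  have hS : #S = 4 := by
    rw [← card_image_of_injective S (smul_left_injective F hu₁), ← hTS, card_eq_four]
    exact ⟨0, u₁, u₂, u₃, hu₁.symm, hu₂.symm, hu₃.symm, h12, h13, h23, rfl⟩
  have hT : ({0, u₁, u₂, u₃} : Set (Fin m → F)) = (· • u₁) '' (S : Set F) := by
    rw [← coe_image, ← hTS]
    simp
  have count n := ncard_nonconstant_affine_lineWeight_add hu₁ S n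
  simp only [Module.finrank_fin_fun, card_filter_lineWeight, card_filter_card_erase,
    card_filter_lineWeight_zero_left (⟨0, by simp [S]⟩ : S.Nonempty), hS, ← hT, ← hq] at count
  set Q := q ^ (m - 1)
  have hQ : 0 < Q := pow_pos (by omega) _
  have hqm : q ^ m = q * Q := by rw [← pow_succ', Nat.sub_add_cancel hm]
  refine ⟨?_, ?_, ?_, ?_, ?_⟩
  · have h := count 0
    norm_num only [if_true, if_false, mul_zero, add_zero, zero_add, one_mul] at h
    omega
  · simpa using count 1
  · simpa using count 2
  · have h := count 3
    norm_num only [if_true, if_false, mul_zero, add_zero, zero_add, one_mul] at h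
    linarith
  · have h := count 4
    norm_num only [if_true, if_false, mul_zero, add_zero, zero_add, one_mul] at h
    have : 4 * Q ≤ q * Q := Nat.mul_le_mul_right _ hq4
    rw [hqm]
    zify [hq4, show 1 ≤ q by omega, show 3 * Q ≤ q * Q by omega,
      show 1 ≤ q * Q - 3 * Q by omega] at h ⊢
    linear_combination h
end

section
/- Let T = {0, u₁, u₂, u₃} where u₁, u₂, u₃ are nonzero and distinct and the span of {u₁, u₂, u₃} has dimension 2, and write (after choosing coordinates) the value vectors as columns (1,0,a), (0,1,b), i.e. u₃ = a u₁ + b u₂. If a + b = 1 or ab = 0, then the numbers a_i of non-constant codewords of RM_q(1,m) with exactly i nonzero values on T are a₀ = q^{m-2} − 1, a₁ = q^{m-2}(q−1), a₂ = 3q^{m-2}(q−1), a₃ = q^{m-2}(q−1)(4q−5), a₄ = (q−1)(q^m − 3q^{m-1} + 2q^{m-2} − 1). -/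
open scoped Classical

open Classical in
noncomputable def rmInd {F : Type*} [Zero F] (x : F) : ℕ := if x = 0 then 0 else 1

lemma rmInd_zero {F : Type*} [Zero F] : rmInd (0 : F) = 0 := by simp [rmInd]

lemma rmInd_of_ne {F : Type*} [Zero F] {x : F} (hx : x ≠ 0) : rmInd x = 1 := by
  simp [rmInd, hx]

lemma rmInd_le_one {F : Type*} [Zero F] (x : F) : rmInd x ≤ 1 := by
  unfold rmInd; split <;> omega

lemma rmInd_eq_zero_iff {F : Type*} [Zero F] {x : F} : rmInd x = 0 ↔ x = 0 := by
  unfold rmInd; split <;> simp_all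

lemma rmInd_eq_one_iff {F : Type*} [Zero F] {x : F} : rmInd x = 1 ↔ x ≠ 0 := by
  unfold rmInd; split <;> simp_all

lemma ncard_sep_insert {γ : Type*} {s : Set γ} (hs : s.Finite) {w : γ} (hw : w ∉ s)
    (P : γ → Prop) :
    {t ∈ insert w s | P t}.ncard = (if P w then 1 else 0) + {t ∈ s | P t}.ncard := by
  classical
  by_cases hPw : P w
  · have he : {t ∈ insert w s | P t} = insert w {t ∈ s | P t} := by
      ext t; simp only [Set.mem_insert_iff, Set.mem_setOf_eq, Set.mem_sep_iff]
      constructor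
      · rintro ⟨h1 | h1, h2⟩
        · exact Or.inl h1
        · exact Or.inr ⟨h1, h2⟩
      · rintro (rfl | ⟨h1, h2⟩)
        · exact ⟨Or.inl rfl, hPw⟩
        · exact ⟨Or.inr h1, h2⟩
    rw [he, Set.ncard_insert_of_notMem (fun hc => hw hc.1)
      (hs.subset (Set.sep_subset _ _))]
    simp [hPw, Nat.add_comm]
  · have he : {t ∈ insert w s | P t} = {t ∈ s | P t} := by
      ext t; simp only [Set.mem_insert_iff, Set.mem_sep_iff]
      constructor
      · rintro ⟨h1 | h1, h2⟩
        · exact absurd (h1 ▸ h2) hPw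
        · exact ⟨h1, h2⟩
      · rintro ⟨h1, h2⟩; exact ⟨Or.inr h1, h2⟩
    rw [he]; simp [hPw]

lemma ncard_sep_four {γ : Type*} {w x y z : γ} (hwx : w ≠ x) (hwy : w ≠ y) (hwz : w ≠ z)
    (hxy : x ≠ y) (hxz : x ≠ z) (hyz : y ≠ z) (P : γ → Prop) :
    {t ∈ ({w, x, y, z} : Set γ) | P t}.ncard =
      (if P w then 1 else 0) + (if P x then 1 else 0) + (if P y then 1 else 0)
        + (if P z then 1 else 0) := by
  have fin3 : ({x, y, z} : Set γ).Finite := (Set.finite_singleton z).insert y |>.insert x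
  have fin2 : ({y, z} : Set γ).Finite := (Set.finite_singleton z).insert y
  rw [show ({w, x, y, z} : Set γ) = insert w {x, y, z} from rfl,
    ncard_sep_insert fin3 (by simp [hwx, hwy, hwz]) P,
    show ({x, y, z} : Set γ) = insert x {y, z} from rfl,
    ncard_sep_insert fin2 (by simp [hxy, hxz]) P,
    show ({y, z} : Set γ) = insert y {z} from rfl,
    ncard_sep_insert (Set.finite_singleton z) (by simp [hyz]) P]
  have : {t ∈ ({z} : Set γ) | P t}.ncard = if P z then 1 else 0 := by
    by_cases hz : P z
    · rw [show {t ∈ ({z} : Set γ) | P t} = {z} by ext t; simp only [Set.mem_sep_iff, Set.mem_singleton_iff]; exact ⟨fun h => h.1, fun h => ⟨h, h ▸ hz⟩⟩]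
      simp [hz]
    · rw [show {t ∈ ({z} : Set γ) | P t} = ∅ by ext t; simp only [Set.mem_sep_iff, Set.mem_singleton_iff, Set.mem_empty_iff_false, iff_false]; rintro ⟨rfl, hp⟩; exact hz hp]
      simp [hz]
  rw [this]; ring


lemma my_ncard_prod {α β : Type*} [Finite α] [Finite β] (s : Set α) (t : Set β) :
    (s ×ˢ t).ncard = s.ncard * t.ncard := by
  rw [← Nat.card_coe_set_eq, ← Nat.card_coe_set_eq, ← Nat.card_coe_set_eq,
    Nat.card_congr (Equiv.Set.prod s t), Nat.card_prod]

lemma my_ncard_compl_singleton {F : Type*} [Fintype F] (x : F) :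
    ({y : F | y ≠ x}).ncard = Fintype.card F - 1 := by
  have : {y : F | y ≠ x} = Set.univ \ {x} := by ext y; simp [Set.mem_diff]
  rw [this, Set.ncard_diff (Set.subset_univ {x}), Set.ncard_univ,
    Nat.card_eq_fintype_card, Set.ncard_singleton]

lemma my_ncard_preimage {α β : Type*} [Finite α] [Finite β] (f : α → β) (K : ℕ)
    (hf : ∀ b : β, Nat.card {a : α // f a = b} = K) (S : Set β) :
    (f ⁻¹' S).ncard = K * S.ncard := by
  have e : (f ⁻¹' S) ≃ (Σ b : S, {a : α // f a = (b : β)}) :=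
    { toFun := fun a => ⟨⟨f a.1, a.2⟩, ⟨a.1, rfl⟩⟩
      invFun := fun p => ⟨p.2.1, by
        have h2 := p.2.2
        have h1 := p.1.2
        simp only [Set.mem_preimage]
        rw [h2]; exact h1⟩
      left_inv := fun a => rfl
      right_inv := fun p => by
        rcases p with ⟨⟨b, hb⟩, ⟨a, ha⟩⟩
        obtain rfl : f a = b := ha
        rfl }
  have : Nat.card (f ⁻¹' S) = Nat.card (Σ b : S, {a : α // f a = (b : β)}) :=
    Nat.card_congr e
  rw [← Nat.card_coe_set_eq, this]
  haveI : Fintype ↥S := Fintype.ofFinite _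
  haveI : ∀ b : S, Fintype {a : α // f a = (b : β)} := fun b => Fintype.ofFinite _
  rw [Nat.card_eq_fintype_card, Fintype.card_sigma]
  simp only [← Nat.card_eq_fintype_card, hf]
  rw [Finset.sum_const, Finset.card_univ, smul_eq_mul, ← Nat.card_eq_fintype_card,
    Nat.card_coe_set_eq, Nat.mul_comm]

section Acount
variable {F : Type*} [Field F] [Fintype F] {α β : F}

/-- value of the (x,y)-count as function of zero-pattern -/
lemma w_zero_iff (hβ : β ≠ 0) (x y : F) : α * x + β * y = 0 ↔ y = -(α / β) * x := by
  field_simp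
  constructor
  · intro h; linear_combination h
  · intro h; linear_combination h

lemma cardA0 (hα : α ≠ 0) (hβ : β ≠ 0) :
    {p : F × F | rmInd p.1 + rmInd p.2 + rmInd (α * p.1 + β * p.2) = 0}.ncard = 1 := by
  have : {p : F × F | rmInd p.1 + rmInd p.2 + rmInd (α * p.1 + β * p.2) = 0}
      = {((0 : F), (0 : F))} := by
    ext ⟨x, y⟩
    simp only [Set.mem_setOf_eq, Set.mem_singleton_iff, Prod.mk.injEq]
    constructor
    · intro hs
      have hx : rmInd x = 0 := by omega
      have hy : rmInd y = 0 := by omega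
      rw [rmInd] at hx hy
      constructor
      · by_contra hc; simp [hc] at hx
      · by_contra hc; simp [hc] at hy
    · rintro ⟨rfl, rfl⟩; simp [rmInd]
  rw [this, Set.ncard_singleton]

lemma cardA1 (hα : α ≠ 0) (hβ : β ≠ 0) :
    {p : F × F | rmInd p.1 + rmInd p.2 + rmInd (α * p.1 + β * p.2) = 1}.ncard = 0 := by
  have : {p : F × F | rmInd p.1 + rmInd p.2 + rmInd (α * p.1 + β * p.2) = 1}
      = (∅ : Set (F × F)) := by
    ext ⟨x, y⟩
    simp only [Set.mem_setOf_eq, Set.mem_empty_iff_false, iff_false]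
    intro hs
    by_cases hx : x = 0 <;> by_cases hy : y = 0
    · subst hx; subst hy; simp [rmInd] at hs
    · subst hx
      rw [rmInd_zero, rmInd_of_ne hy, rmInd_of_ne (by simpa using mul_ne_zero hβ hy)] at hs
      omega
    · subst hy
      rw [rmInd_zero, rmInd_of_ne hx, rmInd_of_ne (by simpa using mul_ne_zero hα hx)] at hs
      omega
    · rw [rmInd_of_ne hx, rmInd_of_ne hy] at hs; omega
  rw [this, Set.ncard_empty]

lemma cardA2 (hα : α ≠ 0) (hβ : β ≠ 0) :
    {p : F × F | rmInd p.1 + rmInd p.2 + rmInd (α * p.1 + β * p.2) = 2}.ncard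
      = 3 * (Fintype.card F - 1) := by
  have hset : {p : F × F | rmInd p.1 + rmInd p.2 + rmInd (α * p.1 + β * p.2) = 2}
      = ({x : F | x ≠ 0} ×ˢ ({0} : Set F)) ∪ (({0} : Set F) ×ˢ {y : F | y ≠ 0})
        ∪ ((fun x : F => (x, -(α / β) * x)) '' {x : F | x ≠ 0}) := by
    ext ⟨x, y⟩
    simp only [Set.mem_setOf_eq, Set.mem_union, Set.mem_prod, Set.mem_singleton_iff,
      Set.mem_image]
    constructor
    · intro hs
      by_cases hx : x = 0 <;> by_cases hy : y = 0
      · subst hx; subst hy; simp [rmInd] at hs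
      · exact Or.inl (Or.inr ⟨hx, hy⟩)
      · exact Or.inl (Or.inl ⟨hx, hy⟩)
      · refine Or.inr ⟨x, hx, ?_⟩
        rw [rmInd_of_ne hx, rmInd_of_ne hy] at hs
        have hw : rmInd (α * x + β * y) = 0 := by omega
        have hw0 : α * x + β * y = 0 := by
          by_contra hc; rw [rmInd_of_ne hc] at hw; omega
        rw [(w_zero_iff hβ x y).mp hw0]
    · rintro ((⟨hx, rfl⟩ | ⟨rfl, hy⟩) | ⟨t, ht, heq⟩)
      · simp only [mul_zero, add_zero]
        rw [rmInd_of_ne hx, rmInd_zero, rmInd_of_ne (mul_ne_zero hα hx)]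
      · simp only [mul_zero, zero_add]
        rw [rmInd_zero, rmInd_of_ne hy, rmInd_of_ne (mul_ne_zero hβ hy)]
      · obtain ⟨rfl, rfl⟩ : t = x ∧ -(α / β) * t = y := by
          exact ⟨congrArg Prod.fst heq, congrArg Prod.snd heq⟩
        have hy : -(α / β) * t ≠ 0 := by
          apply mul_ne_zero _ ht
          simp only [neg_ne_zero]
          exact div_ne_zero hα hβ
        have hw : α * t + β * (-(α / β) * t) = 0 := (w_zero_iff hβ t _).mpr rfl
        rw [rmInd_of_ne ht, rmInd_of_ne hy, hw, rmInd_zero]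
  rw [hset]
  have hfin : ∀ s : Set (F × F), s.Finite := fun s => Set.toFinite s
  have d1 : Disjoint (({x : F | x ≠ 0} ×ˢ ({0} : Set F)) ∪ (({0} : Set F) ×ˢ {y : F | y ≠ 0}))
      ((fun x : F => (x, -(α / β) * x)) '' {x : F | x ≠ 0}) := by
    rw [Set.disjoint_left]
    rintro ⟨x, y⟩ hp ⟨t, ht, heq⟩
    obtain ⟨rfl, rfl⟩ : t = x ∧ -(α / β) * t = y :=
      ⟨congrArg Prod.fst heq, congrArg Prod.snd heq⟩
    have hy : -(α / β) * t ≠ 0 := mul_ne_zero (by simpa using div_ne_zero hα hβ) ht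
    rcases hp with ⟨_, h2⟩ | ⟨h1, _⟩
    · exact hy h2
    · exact ht h1
  have d2 : Disjoint ({x : F | x ≠ 0} ×ˢ ({0} : Set F)) (({0} : Set F) ×ˢ {y : F | y ≠ 0}) := by
    rw [Set.disjoint_left]
    rintro ⟨x, y⟩ ⟨h1, _⟩ ⟨h1', _⟩
    exact h1 h1'
  rw [Set.ncard_union_eq d1 (hfin _) (hfin _), Set.ncard_union_eq d2 (hfin _) (hfin _),
    my_ncard_prod, my_ncard_prod, Set.ncard_image_of_injective _ (fun s t hst => congrArg Prod.fst hst),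
    Set.ncard_singleton]
  have hc : ({x : F | x ≠ 0}).ncard = Fintype.card F - 1 := my_ncard_compl_singleton 0
  rw [hc]; ring

lemma cardA3 (hα : α ≠ 0) (hβ : β ≠ 0) :
    {p : F × F | rmInd p.1 + rmInd p.2 + rmInd (α * p.1 + β * p.2) = 3}.ncard
      = (Fintype.card F - 1) * (Fintype.card F - 2) := by
  have hset : {p : F × F | rmInd p.1 + rmInd p.2 + rmInd (α * p.1 + β * p.2) = 3}
      = ({x : F | x ≠ 0} ×ˢ {y : F | y ≠ 0})
        \ ((fun x : F => (x, -(α / β) * x)) '' {x : F | x ≠ 0}) := by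
    ext ⟨x, y⟩
    simp only [Set.mem_setOf_eq, Set.mem_diff, Set.mem_prod, Set.mem_image]
    constructor
    · intro hs
      have hx : x ≠ 0 := by
        intro hc; subst hc
        simp only [rmInd_zero, mul_zero, zero_add] at hs
        have := rmInd_le_one (F := F) y
        have := rmInd_le_one (F := F) (β * y)
        omega
      have hy : y ≠ 0 := by
        intro hc; subst hc
        simp only [rmInd_zero, mul_zero, add_zero] at hs
        have := rmInd_le_one (F := F) x
        have := rmInd_le_one (F := F) (α * x)
        omega
      refine ⟨⟨hx, hy⟩, ?_⟩
      rintro ⟨t, ht, heq⟩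
      obtain ⟨rfl, rfl⟩ : t = x ∧ -(α / β) * t = y :=
        ⟨congrArg Prod.fst heq, congrArg Prod.snd heq⟩
      have hw : α * t + β * (-(α / β) * t) = 0 := (w_zero_iff hβ t _).mpr rfl
      rw [rmInd_of_ne ht, rmInd_of_ne hy, hw, rmInd_zero] at hs
      omega
    · rintro ⟨⟨hx, hy⟩, hnim⟩
      have hw : α * x + β * y ≠ 0 := by
        intro hc
        exact hnim ⟨x, hx, by rw [← (w_zero_iff hβ x y).mp hc]⟩
      rw [rmInd_of_ne hx, rmInd_of_ne hy, rmInd_of_ne hw]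
  rw [hset]
  have hsub : ((fun x : F => (x, -(α / β) * x)) '' {x : F | x ≠ 0})
      ⊆ ({x : F | x ≠ 0} ×ˢ {y : F | y ≠ 0}) := by
    rintro ⟨x, y⟩ ⟨t, ht, heq⟩
    obtain ⟨rfl, rfl⟩ : t = x ∧ -(α / β) * t = y :=
      ⟨congrArg Prod.fst heq, congrArg Prod.snd heq⟩
    exact ⟨ht, mul_ne_zero (by simpa using div_ne_zero hα hβ) ht⟩
  rw [Set.ncard_diff hsub,
    my_ncard_prod, Set.ncard_image_of_injective _ (fun s t hst => congrArg Prod.fst hst),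
    my_ncard_compl_singleton 0]
  have hq : 1 ≤ Fintype.card F := Fintype.card_pos
  obtain ⟨k, hk⟩ := Nat.exists_eq_add_of_le hq
  rw [hk]
  have e1 : 1 + k - 1 = k := by omega
  have e2 : 1 + k - 2 = k - 1 := by omega
  rw [e1, e2]
  cases k with
  | zero => simp
  | succ r =>
    have h3 : (r + 1) * (r + 1 - 1) = (r + 1) * r := by norm_num
    have h4 : (r + 1) * (r + 1) = (r + 1) * r + (r + 1) := by ring
    rw [h3, h4]
    omega


lemma cardA4 (hα : α ≠ 0) (hβ : β ≠ 0) :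
    {p : F × F | rmInd p.1 + rmInd p.2 + rmInd (α * p.1 + β * p.2) = 4}.ncard = 0 := by
  have : {p : F × F | rmInd p.1 + rmInd p.2 + rmInd (α * p.1 + β * p.2) = 4}
      = (∅ : Set (F × F)) := by
    ext ⟨x, y⟩
    simp only [Set.mem_setOf_eq, Set.mem_empty_iff_false, iff_false]
    intro hs
    have := rmInd_le_one (F := F) x
    have := rmInd_le_one (F := F) y
    have := rmInd_le_one (F := F) (α * x + β * y)
    omega
  rw [this, Set.ncard_empty]

end Acount

section Scount
variable {F : Type*} [Field F] [Fintype F] {α β : F}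

lemma cardS_gen (i ci cj : ℕ)
    (hci : {p : F × F | rmInd p.1 + rmInd p.2 + rmInd (α * p.1 + β * p.2) = i}.ncard = ci)
    (hcj : {p : F × F | rmInd p.1 + rmInd p.2 + rmInd (α * p.1 + β * p.2) + 1 = i}.ncard = cj) :
    {u : (F × F) × F |
        rmInd u.1.1 + rmInd u.1.2 + rmInd u.2 + rmInd (α * u.1.1 + β * u.1.2) = i}.ncard
      = ci + cj * (Fintype.card F - 1) := by
  have hdec : {u : (F × F) × F |
        rmInd u.1.1 + rmInd u.1.2 + rmInd u.2 + rmInd (α * u.1.1 + β * u.1.2) = i}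
      = ({p : F × F | rmInd p.1 + rmInd p.2 + rmInd (α * p.1 + β * p.2) = i} ×ˢ ({0} : Set F))
        ∪ ({p : F × F | rmInd p.1 + rmInd p.2 + rmInd (α * p.1 + β * p.2) + 1 = i}
            ×ˢ {z : F | z ≠ 0}) := by
    ext ⟨⟨x, y⟩, z⟩
    simp only [Set.mem_setOf_eq, Set.mem_union, Set.mem_prod, Set.mem_singleton_iff]
    by_cases hz : z = 0
    · subst hz
      rw [rmInd_zero]
      constructor
      · intro hs; exact Or.inl ⟨by omega, rfl⟩
      · rintro (⟨h1, _⟩ | ⟨h1, h2⟩)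
        · omega
        · exact absurd rfl h2
    · rw [rmInd_of_ne hz]
      constructor
      · intro hs; exact Or.inr ⟨by omega, hz⟩
      · rintro (⟨h1, h2⟩ | ⟨h1, _⟩)
        · exact absurd h2 hz
        · omega
  have hdisj : Disjoint
      ({p : F × F | rmInd p.1 + rmInd p.2 + rmInd (α * p.1 + β * p.2) = i} ×ˢ ({0} : Set F))
      ({p : F × F | rmInd p.1 + rmInd p.2 + rmInd (α * p.1 + β * p.2) + 1 = i}
        ×ˢ {z : F | z ≠ 0}) := by
    rw [Set.disjoint_left]
    rintro ⟨p, z⟩ ⟨_, h2⟩ ⟨_, h2'⟩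
    exact h2' h2
  rw [hdec, Set.ncard_union_eq hdisj (Set.toFinite _) (Set.toFinite _), my_ncard_prod,
    my_ncard_prod, hci, hcj, Set.ncard_singleton, my_ncard_compl_singleton 0, Nat.mul_one]

lemma cardS0 (hα : α ≠ 0) (hβ : β ≠ 0) :
    {u : (F × F) × F |
        rmInd u.1.1 + rmInd u.1.2 + rmInd u.2 + rmInd (α * u.1.1 + β * u.1.2) = 0}.ncard
      = 1 := by
  have h := cardS_gen (α := α) (β := β) 0 1 0 (cardA0 hα hβ) ?_
  · simpa using h
  · have : {p : F × F | rmInd p.1 + rmInd p.2 + rmInd (α * p.1 + β * p.2) + 1 = 0}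
        = (∅ : Set (F × F)) := by
      ext p; simp
    rw [this, Set.ncard_empty]

lemma cardS_shift (i : ℕ) :
    {p : F × F | rmInd p.1 + rmInd p.2 + rmInd (α * p.1 + β * p.2) + 1 = i + 1}
      = {p : F × F | rmInd p.1 + rmInd p.2 + rmInd (α * p.1 + β * p.2) = i} := by
  ext p; simp only [Set.mem_setOf_eq]; omega

lemma cardS1 (hα : α ≠ 0) (hβ : β ≠ 0) :
    {u : (F × F) × F |
        rmInd u.1.1 + rmInd u.1.2 + rmInd u.2 + rmInd (α * u.1.1 + β * u.1.2) = 1}.ncard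
      = Fintype.card F - 1 := by
  have h := cardS_gen (α := α) (β := β) 1 0 1 (cardA1 hα hβ)
    (by rw [cardS_shift 0]; exact cardA0 hα hβ)
  simpa using h

lemma cardS2 (hα : α ≠ 0) (hβ : β ≠ 0) :
    {u : (F × F) × F |
        rmInd u.1.1 + rmInd u.1.2 + rmInd u.2 + rmInd (α * u.1.1 + β * u.1.2) = 2}.ncard
      = 3 * (Fintype.card F - 1) := by
  have h := cardS_gen (α := α) (β := β) 2 (3 * (Fintype.card F - 1)) 0 (cardA2 hα hβ)
    (by rw [cardS_shift 1]; exact cardA1 hα hβ)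
  simpa using h

lemma cardS3 (hα : α ≠ 0) (hβ : β ≠ 0) :
    {u : (F × F) × F |
        rmInd u.1.1 + rmInd u.1.2 + rmInd u.2 + rmInd (α * u.1.1 + β * u.1.2) = 3}.ncard
      = (Fintype.card F - 1) * (Fintype.card F - 2)
        + 3 * (Fintype.card F - 1) * (Fintype.card F - 1) := by
  have h := cardS_gen (α := α) (β := β) 3 ((Fintype.card F - 1) * (Fintype.card F - 2))
    (3 * (Fintype.card F - 1)) (cardA3 hα hβ)
    (by rw [cardS_shift 2]; exact cardA2 hα hβ)
  rw [h]

lemma cardS4 (hα : α ≠ 0) (hβ : β ≠ 0) :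
    {u : (F × F) × F |
        rmInd u.1.1 + rmInd u.1.2 + rmInd u.2 + rmInd (α * u.1.1 + β * u.1.2) = 4}.ncard
      = (Fintype.card F - 1) * (Fintype.card F - 2) * (Fintype.card F - 1) := by
  have h := cardS_gen (α := α) (β := β) 4 0 ((Fintype.card F - 1) * (Fintype.card F - 2))
    (cardA4 hα hβ)
    (by rw [cardS_shift 3]; exact cardA3 hα hβ)
  rw [h]; ring

end Scount

section LA
variable {F : Type} [Field F] [Fintype F] {m : ℕ} {u₁ u₂ : Fin m → F}

lemma exists_dual (h : LinearIndependent F ![u₁, u₂]) (s t : F) :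
    ∃ l : (Fin m → F) →ₗ[F] F, l u₁ = s ∧ l u₂ = t := by
  have hpair := LinearIndependent.pair_iff.mp h
  set φ : (F × F) →ₗ[F] (Fin m → F) :=
    (LinearMap.fst F F F).smulRight u₁ + (LinearMap.snd F F F).smulRight u₂ with hφ
  have hφapp : ∀ p : F × F, φ p = p.1 • u₁ + p.2 • u₂ := fun p => rfl
  have hinj : Function.Injective φ := by
    rw [injective_iff_map_eq_zero]
    rintro ⟨s', t'⟩ hp
    rw [hφapp] at hp
    obtain ⟨hs, ht⟩ := hpair s' t' hp
    simp [Prod.ext_iff, hs, ht]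
  have hsurj := LinearMap.dualMap_surjective_of_injective hinj
  obtain ⟨l, hl⟩ := hsurj (s • LinearMap.fst F F F + t • LinearMap.snd F F F)
  refine ⟨l, ?_, ?_⟩
  · have h1 : φ (1, 0) = u₁ := by rw [hφapp]; simp
    have := congrArg (fun g => g (1, 0)) hl
    simp only [LinearMap.dualMap_apply', LinearMap.comp_apply] at this
    rw [h1] at this
    simpa using this
  · have h2 : φ (0, 1) = u₂ := by rw [hφapp]; simp
    have := congrArg (fun g => g (0, 1)) hl
    simp only [LinearMap.dualMap_apply', LinearMap.comp_apply] at this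
    rw [h2] at this
    simpa using this

lemma card_dual_fiber (h : LinearIndependent F ![u₁, u₂]) (hm : 2 ≤ m) (s t : F) :
    Nat.card {l : (Fin m → F) →ₗ[F] F // l u₁ = s ∧ l u₂ = t}
      = Fintype.card F ^ (m - 2) := by
  classical
  -- all fibers have the same cardinality as the kernel fiber
  have hconst : ∀ s t : F, Nat.card {l : (Fin m → F) →ₗ[F] F // l u₁ = s ∧ l u₂ = t}
      = Nat.card {l : (Fin m → F) →ₗ[F] F // l u₁ = 0 ∧ l u₂ = 0} := by
    intro s t
    obtain ⟨l₀, hl₀1, hl₀2⟩ := exists_dual h s t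
    refine Nat.card_congr ⟨fun l => ⟨l.1 - l₀, by simp [l.2.1, l.2.2, hl₀1, hl₀2]⟩,
      fun l => ⟨l.1 + l₀, by simp [l.2.1, l.2.2, hl₀1, hl₀2]⟩, fun l => by simp, fun l => by simp⟩
  -- total count
  haveI hfinL : Finite ((Fin m → F) →ₗ[F] F) :=
    Finite.of_injective (fun l => (l : (Fin m → F) → F)) DFunLike.coe_injective
  have htot : Nat.card ((Fin m → F) →ₗ[F] F)
      = Fintype.card F * Fintype.card F
        * Nat.card {l : (Fin m → F) →ₗ[F] F // l u₁ = 0 ∧ l u₂ = 0} := by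
    have e : ((Fin m → F) →ₗ[F] F)
        ≃ Σ st : F × F, {l : (Fin m → F) →ₗ[F] F // l u₁ = st.1 ∧ l u₂ = st.2} :=
      { toFun := fun l => ⟨(l u₁, l u₂), ⟨l, rfl, rfl⟩⟩
        invFun := fun p => p.2.1
        left_inv := fun l => rfl
        right_inv := fun p => by
          rcases p with ⟨⟨s', t'⟩, ⟨l, h1, h2⟩⟩
          obtain rfl : l u₁ = s' := h1
          obtain rfl : l u₂ = t' := h2
          rfl }
    rw [Nat.card_congr e]
    haveI : ∀ st : F × F,
        Fintype {l : (Fin m → F) →ₗ[F] F // l u₁ = st.1 ∧ l u₂ = st.2} :=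
      fun st => Fintype.ofFinite _
    rw [Nat.card_eq_fintype_card, Fintype.card_sigma]
    have : ∀ st : F × F,
        Fintype.card {l : (Fin m → F) →ₗ[F] F // l u₁ = st.1 ∧ l u₂ = st.2}
          = Nat.card {l : (Fin m → F) →ₗ[F] F // l u₁ = 0 ∧ l u₂ = 0} := by
      intro st
      rw [← Nat.card_eq_fintype_card, hconst st.1 st.2]
    simp only [this]
    rw [Finset.sum_const, Finset.card_univ, smul_eq_mul, Fintype.card_prod]
  have hdualcard : Nat.card ((Fin m → F) →ₗ[F] F) = Fintype.card F ^ m := by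
    rw [Nat.card_congr (LinearEquiv.piRing F F (Fin m) F).toEquiv, Nat.card_fun]
    simp [Nat.card_eq_fintype_card]
  rw [hconst s t]
  have hq : 0 < Fintype.card F := Fintype.card_pos
  have hpow : Fintype.card F ^ m
      = Fintype.card F * Fintype.card F * Fintype.card F ^ (m - 2) := by
    obtain ⟨k, rfl⟩ := Nat.exists_eq_add_of_le hm
    have : 2 + k - 2 = k := by omega
    rw [this]
    ring
  rw [hdualcard, hpow] at htot
  exact (Nat.eq_of_mul_eq_mul_left (by positivity) htot.symm)

end LA

section Chi
variable {F : Type} [Field F] [Fintype F] {m : ℕ} {u₁ u₂ : Fin m → F}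

lemma card_chi1_fiber (h : LinearIndependent F ![u₁, u₂]) (hm : 2 ≤ m)
    (v : (F × F) × F) :
    Nat.card {p : ((Fin m → F) →ₗ[F] F) × F //
        ((p.2, p.1 u₁ + p.2), p.1 u₂ + p.2) = v}
      = Fintype.card F ^ (m - 2) := by
  rw [← card_dual_fiber h hm (v.1.2 - v.1.1) (v.2 - v.1.1)]
  refine Nat.card_congr ⟨fun p => ⟨p.1.1, ?_, ?_⟩, fun l => ⟨(l.1, v.1.1), ?_⟩, ?_, ?_⟩
  · have := p.2
    rw [Prod.ext_iff, Prod.ext_iff] at this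
    obtain ⟨⟨h1, h2⟩, h3⟩ := this
    rw [← h1, ← h2]; ring
  · have := p.2
    rw [Prod.ext_iff, Prod.ext_iff] at this
    obtain ⟨⟨h1, h2⟩, h3⟩ := this
    rw [← h1, ← h3]; ring
  · obtain ⟨hl1, hl2⟩ := l.2
    rw [Prod.ext_iff, Prod.ext_iff]
    refine ⟨⟨rfl, ?_⟩, ?_⟩ <;> simp [hl1, hl2]
  · rintro ⟨⟨l, c⟩, hp⟩
    rw [Prod.ext_iff, Prod.ext_iff] at hp
    obtain ⟨⟨h1, h2⟩, h3⟩ := hp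
    simp only [Subtype.mk.injEq, Prod.mk.injEq]
    exact ⟨trivial, by simp [← h1]⟩
  · rintro ⟨l, hl⟩
    rfl

lemma card_chi2_fiber (h : LinearIndependent F ![u₁, u₂]) (hm : 2 ≤ m)
    (v : (F × F) × F) :
    Nat.card {p : ((Fin m → F) →ₗ[F] F) × F //
        ((p.1 u₁ + p.2, p.1 u₂ + p.2), p.2) = v}
      = Fintype.card F ^ (m - 2) := by
  rw [← card_dual_fiber h hm (v.1.1 - v.2) (v.1.2 - v.2)]
  refine Nat.card_congr ⟨fun p => ⟨p.1.1, ?_, ?_⟩, fun l => ⟨(l.1, v.2), ?_⟩, ?_, ?_⟩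
  · have := p.2
    rw [Prod.ext_iff, Prod.ext_iff] at this
    obtain ⟨⟨h1, h2⟩, h3⟩ := this
    rw [← h1, ← h3]; ring
  · have := p.2
    rw [Prod.ext_iff, Prod.ext_iff] at this
    obtain ⟨⟨h1, h2⟩, h3⟩ := this
    rw [← h2, ← h3]; ring
  · obtain ⟨hl1, hl2⟩ := l.2
    rw [Prod.ext_iff, Prod.ext_iff]
    refine ⟨⟨?_, ?_⟩, rfl⟩ <;> simp [hl1, hl2]
  · rintro ⟨⟨l, c⟩, hp⟩
    rw [Prod.ext_iff, Prod.ext_iff] at hp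
    obtain ⟨⟨h1, h2⟩, h3⟩ := hp
    simp only [Subtype.mk.injEq, Prod.mk.injEq]
    exact ⟨trivial, by simp [← h3]⟩
  · rintro ⟨l, hl⟩
    rfl

end Chi

lemma three_le_card {F : Type} [Field F] [Fintype F] {c : F} (h0 : c ≠ 0) (h1 : c ≠ 1) :
    3 ≤ Fintype.card F := by
  classical
  have hc : ({0, 1, c} : Finset F).card = 3 := by
    rw [Finset.card_insert_of_notMem (by simp [Ne.symm h0, (zero_ne_one (α := F))]),
      Finset.card_insert_of_notMem (by simp [Ne.symm h1]), Finset.card_singleton]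
  calc 3 = ({0, 1, c} : Finset F).card := hc.symm
    _ ≤ Fintype.card F := Finset.card_le_univ _

lemma arith3 (q m : ℕ) (hm : 2 ≤ m) (hq : 3 ≤ q) :
    q ^ (m - 2) * ((q - 1) * (q - 2) + 3 * (q - 1) * (q - 1))
      = q ^ (m - 2) * (q - 1) * (4 * q - 5) := by
  obtain ⟨r, rfl⟩ := Nat.exists_eq_add_of_le hq
  have e1 : 3 + r - 1 = r + 2 := by omega
  have e2 : 3 + r - 2 = r + 1 := by omega
  have e3 : 4 * (3 + r) - 5 = 4 * r + 7 := by omega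
  rw [e1, e2, e3]
  ring

lemma arith4 (q m : ℕ) (hm : 2 ≤ m) (hq : 3 ≤ q) :
    q ^ (m - 2) * ((q - 1) * (q - 2) * (q - 1)) - (q - 1)
      = (q - 1) * (q ^ m - 3 * q ^ (m - 1) + 2 * q ^ (m - 2) - 1) := by
  obtain ⟨k, rfl⟩ := Nat.exists_eq_add_of_le hm
  have e0 : 2 + k - 2 = k := by omega
  have e1 : 2 + k - 1 = k + 1 := by omega
  rw [e0, e1]
  have hP : 1 ≤ q ^ k := Nat.one_le_pow _ _ (by omega)
  have hpow2 : q ^ (2 + k) = q ^ k * q * q := by ring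
  have hpow1 : q ^ (k + 1) = q ^ k * q := by ring
  rw [hpow2, hpow1]
  set P := q ^ k
  have h2 : 3 * (P * q) ≤ P * q * q := by
    calc 3 * (P * q) = P * q * 3 := by ring
      _ ≤ P * q * q := Nat.mul_le_mul_left _ hq
  have h3 : 1 ≤ P * q * q - 3 * (P * q) + 2 * P := by omega
  have h1 : q - 1 ≤ P * ((q - 1) * (q - 2) * (q - 1)) := by
    obtain ⟨r, rfl⟩ := Nat.exists_eq_add_of_le hq
    have f1 : 3 + r - 1 = r + 2 := by omega
    have f2 : 3 + r - 2 = r + 1 := by omega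
    rw [f1, f2]
    calc r + 2 = 1 * ((r + 2) * 1 * 1) := by ring
      _ ≤ P * ((r + 2) * (r + 1) * (r + 2)) := by
          apply Nat.mul_le_mul hP
          apply Nat.mul_le_mul
          apply Nat.mul_le_mul_left
          all_goals omega
  have hq1 : 1 ≤ q := by omega
  have hq2 : 2 ≤ q := by omega
  zify [h1, h2, h3, hq1, hq2]
  push_cast
  ring

/-- Rank-2 case of `T = {0, u₁, u₂, u₃}` with `u₃ = a•u₁ + b•u₂`, first subcase
`a + b = 1` or `ab = 0`: counts of non-constant codewords of `RM_q(1,m)` by number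
of nonzero values on `T`. -/
theorem stmt_14 (F : Type) [Field F] [Fintype F] (q m : ℕ) (hq : q = Fintype.card F)
    (hm : 2 ≤ m) (u₁ u₂ u₃ : Fin m → F) (h : LinearIndependent F ![u₁, u₂])
    (a b : F) (hu₃ : u₃ = a • u₁ + b • u₂)
    (hab0 : ¬(a = 0 ∧ b = 0)) (hab1 : ¬(a = 1 ∧ b = 0)) (hab2 : ¬(a = 0 ∧ b = 1))
    (hcase : a + b = 1 ∨ a * b = 0)
    (T : Set (Fin m → F)) (hT : T = {0, u₁, u₂, u₃})
    (NC : Set ((Fin m → F) → F))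
    (hNC : NC = {c | ∃ (l : (Fin m → F) →ₗ[F] F), l ≠ 0 ∧ ∃ b₀ : F, c = fun x => l x + b₀}) :
    {c ∈ NC | {x ∈ T | c x ≠ 0}.ncard = 0}.ncard = q ^ (m - 2) - 1 ∧
    {c ∈ NC | {x ∈ T | c x ≠ 0}.ncard = 1}.ncard = q ^ (m - 2) * (q - 1) ∧
    {c ∈ NC | {x ∈ T | c x ≠ 0}.ncard = 2}.ncard = 3 * q ^ (m - 2) * (q - 1) ∧
    {c ∈ NC | {x ∈ T | c x ≠ 0}.ncard = 3}.ncard = q ^ (m - 2) * (q - 1) * (4 * q - 5) ∧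
    {c ∈ NC | {x ∈ T | c x ≠ 0}.ncard = 4}.ncard
      = (q - 1) * (q ^ m - 3 * q ^ (m - 1) + 2 * q ^ (m - 2) - 1) := by
  classical
  subst hq
  haveI finL : Finite ((Fin m → F) →ₗ[F] F) :=
    Finite.of_injective (fun l => (l : (Fin m → F) → F)) DFunLike.coe_injective
  have hpair := LinearIndependent.pair_iff.mp h
  -- distinctness
  have h01 : (0 : Fin m → F) ≠ u₁ := by
    intro he
    exact one_ne_zero (hpair 1 0 (by rw [← he]; simp)).1
  have h02 : (0 : Fin m → F) ≠ u₂ := by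
    intro he
    exact one_ne_zero (hpair 0 1 (by rw [← he]; simp)).2
  have h03 : (0 : Fin m → F) ≠ u₃ := by
    intro he
    rw [hu₃] at he
    obtain ⟨ha, hb⟩ := hpair a b he.symm
    exact hab0 ⟨ha, hb⟩
  have h12 : u₁ ≠ u₂ := by
    intro he
    exact one_ne_zero (hpair 1 (-1) (by rw [he]; simp)).1
  have h13 : u₁ ≠ u₃ := by
    intro he
    rw [hu₃] at he
    have hz : (a - 1) • u₁ + b • u₂ = 0 := by
      have hh : (a - 1) • u₁ + b • u₂ = (a • u₁ + b • u₂) - u₁ := by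
        rw [sub_smul, one_smul]; abel
      rw [hh, ← he, sub_self]
    obtain ⟨ha, hb⟩ := hpair _ _ hz
    exact hab1 ⟨by linear_combination ha, hb⟩
  have h23 : u₂ ≠ u₃ := by
    intro he
    rw [hu₃] at he
    have hz : a • u₁ + (b - 1) • u₂ = 0 := by
      have hh : a • u₁ + (b - 1) • u₂ = (a • u₁ + b • u₂) - u₂ := by
        rw [sub_smul, one_smul]; abel
      rw [hh, ← he, sub_self]
    obtain ⟨ha, hb⟩ := hpair _ _ hz
    exact hab2 ⟨ha, by linear_combination hb⟩
  -- counting on T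
  have hcount : ∀ c : (Fin m → F) → F, {x ∈ T | c x ≠ 0}.ncard
      = rmInd (c 0) + rmInd (c u₁) + rmInd (c u₂) + rmInd (c u₃) := by
    intro c
    rw [hT, ncard_sep_four h01 h02 h03 h12 h13 h23 (fun t => c t ≠ 0)]
    by_cases k0 : c 0 = 0 <;> by_cases k1 : c u₁ = 0 <;> by_cases k2 : c u₂ = 0 <;>
      by_cases k3 : c u₃ = 0 <;> simp [rmInd, k0, k1, k2, k3]
  -- parametrization
  set Φ : (((Fin m → F) →ₗ[F] F) × F) → ((Fin m → F) → F) :=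
    fun p => fun x => p.1 x + p.2 with hΦ
  have hΦinj : Function.Injective Φ := by
    rintro ⟨l, c⟩ ⟨l', c'⟩ he
    have hc : c = c' := by
      have := congrFun he 0
      simpa [hΦ] using this
    have hl : l = l' := by
      refine LinearMap.ext fun x => ?_
      have := congrFun he x
      simp only [hΦ, hc] at this
      exact add_right_cancel this
    rw [hl, hc]
  set cnt : (((Fin m → F) →ₗ[F] F) × F) → ℕ :=
    fun p => rmInd p.2 + rmInd (p.1 u₁ + p.2) + rmInd (p.1 u₂ + p.2)
      + rmInd (a * p.1 u₁ + b * p.1 u₂ + p.2) with hcntdef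
  have hval : ∀ p, {x ∈ T | Φ p x ≠ 0}.ncard = cnt p := by
    intro p
    rw [hcount]
    have e0 : Φ p 0 = p.2 := by simp [hΦ]
    have e1 : Φ p u₁ = p.1 u₁ + p.2 := rfl
    have e2 : Φ p u₂ = p.1 u₂ + p.2 := rfl
    have e3 : Φ p u₃ = a * p.1 u₁ + b * p.1 u₂ + p.2 := by
      simp [hΦ, hu₃, smul_eq_mul]
    rw [e0, e1, e2, e3]
  have hset : ∀ i : ℕ, {c ∈ NC | {x ∈ T | c x ≠ 0}.ncard = i}
      = Φ '' {p | p.1 ≠ 0 ∧ cnt p = i} := by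
    intro i
    ext c
    simp only [hNC, Set.mem_setOf_eq, Set.mem_image, Set.mem_sep_iff]
    constructor
    · rintro ⟨⟨l, hl, b₀, rfl⟩, hcn⟩
      exact ⟨(l, b₀), ⟨hl, by rw [← hval (l, b₀)]; exact hcn⟩, rfl⟩
    · rintro ⟨⟨l, b₀⟩, ⟨hl, hcn⟩, rfl⟩
      exact ⟨⟨l, hl, b₀, rfl⟩, by rw [hval]; exact hcn⟩
  have hDcard : ∀ i : ℕ, {c ∈ NC | {x ∈ T | c x ≠ 0}.ncard = i}.ncard
      = {p | p.1 ≠ 0 ∧ cnt p = i}.ncard := by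
    intro i
    rw [hset i, Set.ncard_image_of_injective _ hΦinj]
  -- split off p.1 = 0
  have hsplit : ∀ i : ℕ, {p | cnt p = i}.ncard
      = {p | p.1 ≠ 0 ∧ cnt p = i}.ncard + {p | p.1 = 0 ∧ cnt p = i}.ncard := by
    intro i
    rw [← Set.ncard_union_eq (by
        rw [Set.disjoint_left]
        rintro p ⟨hp1, _⟩ ⟨hp1', _⟩
        exact hp1 hp1') (Set.toFinite _) (Set.toFinite _)]
    congr 1
    ext p
    simp only [Set.mem_setOf_eq, Set.mem_union]
    constructor
    · intro hp
      by_cases hz : p.1 = 0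
      · exact Or.inr ⟨hz, hp⟩
      · exact Or.inl ⟨hz, hp⟩
    · rintro (⟨_, hp⟩ | ⟨_, hp⟩) <;> exact hp
  -- the degenerate part
  have hzcnt : ∀ c : F, cnt ((0 : (Fin m → F) →ₗ[F] F), c) = 4 * rmInd c := by
    intro c
    simp only [hcntdef, LinearMap.zero_apply, zero_add, mul_zero, add_zero]
    ring
  have hZ0 : {p : ((Fin m → F) →ₗ[F] F) × F | p.1 = 0 ∧ cnt p = 0}.ncard = 1 := by
    have : {p : ((Fin m → F) →ₗ[F] F) × F | p.1 = 0 ∧ cnt p = 0}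
        = {((0 : (Fin m → F) →ₗ[F] F), (0 : F))} := by
      ext ⟨l, c⟩
      simp only [Set.mem_setOf_eq, Set.mem_singleton_iff, Prod.mk.injEq]
      constructor
      · rintro ⟨rfl, hc⟩
        rw [hzcnt c] at hc
        refine ⟨rfl, ?_⟩
        by_contra hcc
        rw [rmInd_of_ne hcc] at hc
        omega
      · rintro ⟨rfl, rfl⟩
        exact ⟨rfl, by rw [hzcnt, rmInd_zero]⟩
    rw [this, Set.ncard_singleton]
  have hZmid : ∀ i : ℕ, i = 1 ∨ i = 2 ∨ i = 3 →
      {p : ((Fin m → F) →ₗ[F] F) × F | p.1 = 0 ∧ cnt p = i}.ncard = 0 := by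
    intro i hi
    have : {p : ((Fin m → F) →ₗ[F] F) × F | p.1 = 0 ∧ cnt p = i} = ∅ := by
      ext ⟨l, c⟩
      simp only [Set.mem_setOf_eq, Set.mem_empty_iff_false, iff_false, not_and]
      rintro rfl hc
      rw [hzcnt c] at hc
      have := rmInd_le_one c
      interval_cases hh : rmInd c <;> omega
    rw [this, Set.ncard_empty]
  have hZ4 : {p : ((Fin m → F) →ₗ[F] F) × F | p.1 = 0 ∧ cnt p = 4}.ncard
      = Fintype.card F - 1 := by
    have : {p : ((Fin m → F) →ₗ[F] F) × F | p.1 = 0 ∧ cnt p = 4}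
        = ({(0 : (Fin m → F) →ₗ[F] F)} : Set ((Fin m → F) →ₗ[F] F)) ×ˢ {c : F | c ≠ 0} := by
      ext ⟨l, c⟩
      simp only [Set.mem_setOf_eq, Set.mem_prod, Set.mem_singleton_iff]
      constructor
      · rintro ⟨rfl, hc⟩
        rw [hzcnt c] at hc
        refine ⟨rfl, ?_⟩
        intro hcc
        rw [hcc, rmInd_zero] at hc
        omega
      · rintro ⟨rfl, hc⟩
        exact ⟨rfl, by rw [hzcnt, rmInd_of_ne hc]⟩
    rw [this, my_ncard_prod, Set.ncard_singleton, my_ncard_compl_singleton 0, Nat.one_mul]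
  -- key branch data
  have key : ∃ (χ : (((Fin m → F) →ₗ[F] F) × F) → ((F × F) × F)) (α β : F),
      α ≠ 0 ∧ β ≠ 0 ∧ 3 ≤ Fintype.card F ∧
      (∀ v, Nat.card {p : ((Fin m → F) →ₗ[F] F) × F // χ p = v}
        = Fintype.card F ^ (m - 2)) ∧
      (∀ i : ℕ, {p | cnt p = i}
        = χ ⁻¹' {u : (F × F) × F |
            rmInd u.1.1 + rmInd u.1.2 + rmInd u.2 + rmInd (α * u.1.1 + β * u.1.2) = i}) := by
    rcases hcase with hc1 | hc2
    · -- a + b = 1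
      have ha0 : a ≠ 0 := fun hz => hab2 ⟨hz, by linear_combination hc1 - hz⟩
      have hb0 : b ≠ 0 := fun hz => hab1 ⟨by linear_combination hc1 - hz, hz⟩
      have ha1 : a ≠ 1 := fun hz => hab1 ⟨hz, by linear_combination hc1 - hz⟩
      refine ⟨fun p => ((p.1 u₁ + p.2, p.1 u₂ + p.2), p.2), a, b, ha0, hb0,
        three_le_card ha0 ha1, card_chi2_fiber h hm, ?_⟩
      intro i
      ext p
      simp only [Set.mem_setOf_eq, Set.mem_preimage]
      have harg : a * (p.1 u₁ + p.2) + b * (p.1 u₂ + p.2)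
          = a * p.1 u₁ + b * p.1 u₂ + p.2 := by linear_combination p.2 * hc1
      simp only [Set.mem_setOf_eq, Set.mem_preimage, hcntdef]
      rw [harg]
      constructor <;> intro <;> omega
    · rcases mul_eq_zero.mp hc2 with ha | hb
      · -- a = 0
        have hb0 : b ≠ 0 := fun hz => hab0 ⟨ha, hz⟩
        have hb1 : b ≠ 1 := fun hz => hab2 ⟨ha, hz⟩
        have hswap : LinearIndependent F ![u₂, u₁] := by
          rw [LinearIndependent.pair_iff]
          intro s t hst
          obtain ⟨h1, h2⟩ := hpair t s (by rw [add_comm]; exact hst)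
          exact ⟨h2, h1⟩
        refine ⟨fun p => ((p.2, p.1 u₂ + p.2), p.1 u₁ + p.2), 1 - b, b,
          sub_ne_zero.mpr (Ne.symm hb1), hb0, three_le_card hb0 hb1,
          card_chi1_fiber hswap hm, ?_⟩
        intro i
        ext p
        simp only [Set.mem_setOf_eq, Set.mem_preimage]
        have harg : (1 - b) * p.2 + b * (p.1 u₂ + p.2)
            = a * p.1 u₁ + b * p.1 u₂ + p.2 := by rw [ha]; ring
        simp only [Set.mem_setOf_eq, Set.mem_preimage, hcntdef]
        rw [harg]
        constructor <;> intro <;> omega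
      · -- b = 0
        have ha0 : a ≠ 0 := fun hz => hab0 ⟨hz, hb⟩
        have ha1 : a ≠ 1 := fun hz => hab1 ⟨hz, hb⟩
        refine ⟨fun p => ((p.2, p.1 u₁ + p.2), p.1 u₂ + p.2), 1 - a, a,
          sub_ne_zero.mpr (Ne.symm ha1), ha0, three_le_card ha0 ha1,
          card_chi1_fiber h hm, ?_⟩
        intro i
        ext p
        simp only [Set.mem_setOf_eq, Set.mem_preimage]
        have harg : (1 - a) * p.2 + a * (p.1 u₁ + p.2)
            = a * p.1 u₁ + b * p.1 u₂ + p.2 := by rw [hb]; ring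
        simp only [Set.mem_setOf_eq, Set.mem_preimage, hcntdef]
        rw [harg]
  obtain ⟨χ, α, β, hα, hβ, hq3, hfib, hE⟩ := key
  have hEcard : ∀ i : ℕ, {p | cnt p = i}.ncard
      = Fintype.card F ^ (m - 2) *
        {u : (F × F) × F |
          rmInd u.1.1 + rmInd u.1.2 + rmInd u.2 + rmInd (α * u.1.1 + β * u.1.2) = i}.ncard := by
    intro i
    rw [hE i]
    exact my_ncard_preimage χ _ hfib _
  have hE0 := hEcard 0; rw [cardS0 hα hβ] at hE0
  have hE1 := hEcard 1; rw [cardS1 hα hβ] at hE1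
  have hE2 := hEcard 2; rw [cardS2 hα hβ] at hE2
  have hE3 := hEcard 3; rw [cardS3 hα hβ] at hE3
  have hE4 := hEcard 4; rw [cardS4 hα hβ] at hE4
  have hs0 := hsplit 0; rw [hE0, hZ0] at hs0
  have hs1 := hsplit 1; rw [hE1, hZmid 1 (by omega)] at hs1
  have hs2 := hsplit 2; rw [hE2, hZmid 2 (by omega)] at hs2
  have hs3 := hsplit 3; rw [hE3, hZmid 3 (by omega)] at hs3
  have hs4 := hsplit 4; rw [hE4, hZ4] at hs4
  refine ⟨?_, ?_, ?_, ?_, ?_⟩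
  · rw [hDcard 0]; omega
  · rw [hDcard 1]; omega
  · rw [hDcard 2]
    have hr : Fintype.card F ^ (m - 2) * (3 * (Fintype.card F - 1))
        = 3 * Fintype.card F ^ (m - 2) * (Fintype.card F - 1) := by ring
    omega
  · rw [hDcard 3]
    have harith := arith3 (Fintype.card F) m hm hq3
    omega
  · rw [hDcard 4]
    have harith := arith4 (Fintype.card F) m hm hq3
    omega
end
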